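/- arXiv:2002.06930 — 4 statements merged into one kernel-verified Lean document; each statement's English description precedes it below -/
import Mathlib

section
/- For every n ≥ 1 and every 1 ≤ i ≤ n, the polynomials d_{n,i}^B(x) satisfy the recurrence d_{n,i}^B(x) = d_{n,i-1}^B(x) + d_{n-1,i-1}^B(x) (an identity of polynomials in x). -/
open scoped Classical
open Finset

noncomputable section

/-- 1-based value of a permutation of `Fin n` at position `k ∈ [1,n]`; `0` elsewhere. -/
def permVal {n : ℕ} (π : Equiv.Perm (Fin n)) (k : ℕ) : ℕ :=
  if h : 1 ≤ k ∧ k ≤ n then (π ⟨k - 1, by omega⟩).val + 1 else 0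

/-- number of descents -/
def desNum {n : ℕ} (π : Equiv.Perm (Fin n)) : ℕ :=
  ((Finset.Icc 1 (n - 1)).filter fun i => permVal π (i + 1) < permVal π i).card

/-- number of ascents -/
def ascNum {n : ℕ} (π : Equiv.Perm (Fin n)) : ℕ :=
  ((Finset.Icc 1 (n - 1)).filter fun i => permVal π i < permVal π (i + 1)).card

/-- number of big ascents -/
def bascNum {n : ℕ} (π : Equiv.Perm (Fin n)) : ℕ :=
  ((Finset.Icc 1 (n - 1)).filter fun i => permVal π i + 2 ≤ permVal π (i + 1)).card

/-- number of successions -/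
def sucNum {n : ℕ} (π : Equiv.Perm (Fin n)) : ℕ :=
  ((Finset.Icc 1 (n - 1)).filter fun i => permVal π (i + 1) = permVal π i + 1).card

/-- number of excedances -/
def excNum {n : ℕ} (π : Equiv.Perm (Fin n)) : ℕ :=
  ((Finset.Icc 1 n).filter fun i => i < permVal π i).card

/-- number of anti-excedances -/
def aexcNum {n : ℕ} (π : Equiv.Perm (Fin n)) : ℕ :=
  ((Finset.Icc 1 n).filter fun i => permVal π i < i).card

/-- number of fixed points -/
def fixNum {n : ℕ} (π : Equiv.Perm (Fin n)) : ℕ :=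
  ((Finset.Icc 1 n).filter fun i => permVal π i = i).card

/-- number of cycles (counted as number of cycle minima) -/
def cycNum {n : ℕ} (π : Equiv.Perm (Fin n)) : ℕ :=
  ((Finset.Icc 1 n).filter fun i => ∀ m : ℕ, i ≤ (permVal π)^[m] i).card

/-- number of left peaks (with the convention π(0)=0) -/
def lpkNum {n : ℕ} (π : Equiv.Perm (Fin n)) : ℕ :=
  ((Finset.Icc 1 (n - 1)).filter fun i =>
    permVal π (i - 1) < permVal π i ∧ permVal π (i + 1) < permVal π i).card

/-- `π` has no cycle double ascents. -/
def CdaFree {n : ℕ} (π : Equiv.Perm (Fin n)) : Prop :=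
  ∀ v ∈ Finset.Icc 1 n, ¬ (permVal π⁻¹ v < v ∧ v < permVal π v)

/-- value at `v` of the permutation of `[n-k]` obtained from `π` by removing
the `k` largest letters: `π^m(v)` for the least `m ≥ 1` with `π^m(v) ≤ n-k`. -/
def removeVal {n : ℕ} (π : Equiv.Perm (Fin n)) (k v : ℕ) : ℕ :=
  permVal (π ^ (WithTop.untopD 1
    (((Finset.Icc 1 n).filter fun m => permVal (π ^ m) v ≤ n - k).min))) v

/-- simsun permutation of the second kind -/
def Simsun2 {n : ℕ} (π : Equiv.Perm (Fin n)) : Prop :=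
  ∀ k ≤ n, ∀ v ∈ Finset.Icc 1 (n - k),
    ¬ (removeVal π⁻¹ k v < v ∧ v < removeVal π k v)

/-- Eulerian polynomial -/
def EulerA (n : ℕ) (x : ℝ) : ℝ := ∑ π : Equiv.Perm (Fin n), x ^ desNum π

/-- derangement polynomial -/
def dpoly (n : ℕ) (x : ℝ) : ℝ :=
  ∑ π ∈ (Finset.univ : Finset (Equiv.Perm (Fin n))).filter (fun π => fixNum π = 0),
    x ^ excNum π

/-- `A_n(x,y,s) = Σ_π x^basc(π) y^des(π) s^suc(π)` -/
def Apoly (n : ℕ) (x y s : ℝ) : ℝ :=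
  ∑ π : Equiv.Perm (Fin n), x ^ bascNum π * y ^ desNum π * s ^ sucNum π

/- ### Signed permutations -/

/-- 1-based (integer) value of a signed permutation encoded as `σ : Fin n → Fin n × Bool`,
where the `Bool` records a negative sign. -/
def bval {n : ℕ} (σ : Fin n → Fin n × Bool) (k : ℕ) : ℤ :=
  if h : 1 ≤ k ∧ k ≤ n then
    (if (σ ⟨k - 1, by omega⟩).2 then -(((σ ⟨k - 1, by omega⟩).1 : ℤ) + 1)
     else ((σ ⟨k - 1, by omega⟩).1 : ℤ) + 1)
  else 0

/-- The hyperoctahedral group `B_n`: signed permutations of order `n`, encoded as maps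
`Fin n → Fin n × Bool` whose first component is injective. -/
def BPerms (n : ℕ) : Finset (Fin n → Fin n × Bool) :=
  Finset.univ.filter fun σ => Function.Injective fun i => (σ i).1

/-- type B excedances: positions `i` with `σ(|σ(i)|) > σ(i)` -/
def bexcNum {n : ℕ} (σ : Fin n → Fin n × Bool) : ℕ :=
  ((Finset.Icc 1 n).filter fun i => bval σ i < bval σ (bval σ i).natAbs).card

/-- type B anti-excedances: positions `i` with `σ(|σ(i)|) < σ(i)` -/
def baexcNum {n : ℕ} (σ : Fin n → Fin n × Bool) : ℕ :=
  ((Finset.Icc 1 n).filter fun i => bval σ (bval σ i).natAbs < bval σ i).card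

/-- fixed points: `σ(i) = i` -/
def bfixNum {n : ℕ} (σ : Fin n → Fin n × Bool) : ℕ :=
  ((Finset.Icc 1 n).filter fun i => bval σ i = (i : ℤ)).card

/-- singletons: `σ(i) = -i` -/
def bstNum {n : ℕ} (σ : Fin n → Fin n × Bool) : ℕ :=
  ((Finset.Icc 1 n).filter fun i => bval σ i = -(i : ℤ)).card

/-- number of negative entries -/
def bnegNum {n : ℕ} (σ : Fin n → Fin n × Bool) : ℕ :=
  ((Finset.Icc 1 n).filter fun i => bval σ i < 0).card

/-- number of cycles of the permutation `i ↦ |σ(i)|` of `[n]` -/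
def bcycNum {n : ℕ} (σ : Fin n → Fin n × Bool) : ℕ :=
  ((Finset.Icc 1 n).filter fun i => ∀ m : ℕ, i ≤ (fun k => (bval σ k).natAbs)^[m] i).card

/-- weak excedances: `σ(i) = i` or `σ(|σ(i)|) > σ(i)` -/
def bwexcNum {n : ℕ} (σ : Fin n → Fin n × Bool) : ℕ :=
  ((Finset.Icc 1 n).filter fun i =>
    bval σ i = (i : ℤ) ∨ bval σ i < bval σ (bval σ i).natAbs).card

/-- `B_n(x,y,s,t,p,q)` -/
def Bpoly (n : ℕ) (x y s t p q : ℝ) : ℝ :=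
  ∑ σ ∈ BPerms n, x ^ bexcNum σ * y ^ baexcNum σ * s ^ bfixNum σ *
    t ^ bstNum σ * p ^ bcycNum σ * q ^ bnegNum σ


/-- `d_{n,i}^B(x)`: for `i ≥ 1`, the excedance polynomial over type B derangements of order
`n` whose set of negative entries is exactly `{-(n-i+1),…,-n}`; for `i = 0`, the (type A)
derangement polynomial `d_n(x)`. -/
def dBni (n i : ℕ) (x : ℝ) : ℝ :=
  if i = 0 then dpoly n x
  else ∑ σ ∈ (BPerms n).filter (fun σ => bfixNum σ = 0 ∧
      ∀ k ∈ Finset.Icc 1 n, (bval σ k < 0 ↔ (n : ℤ) - (i : ℤ) < |bval σ k|)),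
    x ^ bexcNum σ


namespace DBAux

open Equiv Finset

/-! ### Basic `permVal` lemmas -/

lemma permVal_def {n : ℕ} (π : Equiv.Perm (Fin n)) {k : ℕ} (h1 : 1 ≤ k) (h2 : k ≤ n) :
    permVal π k = (π ⟨k - 1, by omega⟩).val + 1 := by
  rw [permVal, dif_pos ⟨h1, h2⟩]

lemma permVal_fin {n : ℕ} (π : Equiv.Perm (Fin n)) (a : Fin n) :
    permVal π (a.val + 1) = (π a).val + 1 := by
  have := a.isLt
  rw [permVal_def π (by omega) (by omega)]
  congr 2

lemma permVal_mem {n : ℕ} (π : Equiv.Perm (Fin n)) {k : ℕ} (h1 : 1 ≤ k) (h2 : k ≤ n) :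
    1 ≤ permVal π k ∧ permVal π k ≤ n := by
  rw [permVal_def π h1 h2]
  have := (π ⟨k - 1, by omega⟩).isLt
  omega

lemma permVal_apply_inv {n : ℕ} (π : Equiv.Perm (Fin n)) {k : ℕ} (h1 : 1 ≤ k) (h2 : k ≤ n) :
    permVal π⁻¹ (permVal π k) = k := by
  rw [permVal_def π h1 h2, permVal_fin]
  simp only [Equiv.Perm.inv_def, Equiv.symm_apply_apply]
  omega

lemma permVal_inj {n : ℕ} (π : Equiv.Perm (Fin n)) {k l : ℕ} (hk1 : 1 ≤ k) (hk2 : k ≤ n)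
    (hl1 : 1 ≤ l) (hl2 : l ≤ n) (h : permVal π k = permVal π l) : k = l := by
  have := permVal_apply_inv π hk1 hk2
  have := permVal_apply_inv π hl1 hl2
  rw [h] at *
  omega

lemma permVal_mul {n : ℕ} (π ρ : Equiv.Perm (Fin n)) {k : ℕ} (h1 : 1 ≤ k) (h2 : k ≤ n) :
    permVal (π * ρ) k = permVal π (permVal ρ k) := by
  rw [permVal_def ρ h1 h2, permVal_fin, permVal_def (π * ρ) h1 h2]
  rfl

/-! ### The sets and sums -/

/-- signed value of `q` relative to threshold `m` -/
def sInt (m q : ℕ) : ℤ := if m < q then -(q : ℤ) else (q : ℤ)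

/-- permutations with no fixed point among positions `1..m` -/
def NF (n m : ℕ) : Finset (Equiv.Perm (Fin n)) :=
  Finset.univ.filter fun π => ∀ j ∈ Finset.Icc 1 m, permVal π j ≠ j

/-- type-B-excedance-style statistic with threshold `m` -/
def Est (n m : ℕ) (π : Equiv.Perm (Fin n)) : ℕ :=
  ((Finset.Icc 1 n).filter fun j => sInt m j < sInt m (permVal π j)).card

/-- plain excedance generating sum over `NF n m` -/
def C (n m : ℕ) (x : ℝ) : ℝ := ∑ π ∈ NF n m, x ^ excNum π

/-! ### The reversal involution -/

def wFun (n m : ℕ) (a : Fin n) : Fin n :=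
  if h : a.val < m then a else ⟨n + m - 1 - a.val, by have := a.isLt; omega⟩

lemma wFun_invol (n m : ℕ) : Function.Involutive (wFun n m) := by
  intro a
  have ha := a.isLt
  unfold wFun
  split_ifs with h1 h2 h3 <;> first
    | rfl
    | (ext; simp only [] at *; omega)

def wP (n m : ℕ) : Equiv.Perm (Fin n) := (wFun_invol n m).toPerm _

/-- 1-based version of the reversal -/
def wv (n m j : ℕ) : ℕ := if j ≤ m then j else n + m + 1 - j

lemma permVal_wP {n m : ℕ} {j : ℕ} (h1 : 1 ≤ j) (h2 : j ≤ n) :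
    permVal (wP n m) j = wv n m j := by
  rw [permVal_def _ h1 h2]
  show (wFun n m ⟨j - 1, by omega⟩).val + 1 = _
  unfold wFun wv
  by_cases hc : j - 1 < m
  · rw [dif_pos hc, if_pos (by omega)]
    show j - 1 + 1 = j
    omega
  · rw [dif_neg hc, if_neg (by omega)]
    show n + m - 1 - (j - 1) + 1 = n + m + 1 - j
    omega

lemma wv_mem {n m j : ℕ} (hm : m ≤ n) (h1 : 1 ≤ j) (h2 : j ≤ n) :
    1 ≤ wv n m j ∧ wv n m j ≤ n := by
  unfold wv; split_ifs <;> omega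

lemma wv_wv {n m j : ℕ} (hm : m ≤ n) (h1 : 1 ≤ j) (h2 : j ≤ n) :
    wv n m (wv n m j) = j := by
  unfold wv; split_ifs <;> omega

lemma wP_mul_wP (n m : ℕ) : wP n m * wP n m = 1 := by
  ext a
  show ((wFun n m (wFun n m a)) : ℕ) = _
  rw [wFun_invol n m a]
  rfl

end DBAux


namespace DBAux

open Equiv Finset

lemma card_pv_le (n m : ℕ) (hm : m ≤ n) (π : Equiv.Perm (Fin n)) :
    (((Finset.Icc 1 n)).filter fun j => permVal π j ≤ m).card = m := by
  have h2 : (Finset.Icc 1 m).card = m := by simp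
  conv_rhs => rw [← h2]
  apply Finset.card_nbij' (i := fun j => permVal π j) (j := fun v => permVal π⁻¹ v)
  · intro a ha
    simp only [Finset.mem_coe, Finset.mem_filter, Finset.mem_Icc] at ha ⊢
    exact ⟨(permVal_mem π ha.1.1 ha.1.2).1, ha.2⟩
  · intro v hv
    simp only [Finset.mem_coe, Finset.mem_filter, Finset.mem_Icc] at hv ⊢
    have hb := permVal_mem π⁻¹ hv.1 (le_trans hv.2 hm)
    have : permVal π⁻¹⁻¹ (permVal π⁻¹ v) = v := permVal_apply_inv π⁻¹ hv.1 (le_trans hv.2 hm)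
    rw [inv_inv] at this
    exact ⟨⟨hb.1, hb.2⟩, by omega⟩
  · intro a ha
    simp only [Finset.mem_coe, Finset.mem_filter, Finset.mem_Icc] at ha
    exact permVal_apply_inv π ha.1.1 ha.1.2
  · intro v hv
    simp only [Finset.mem_coe, Finset.mem_Icc] at hv
    have : permVal π⁻¹⁻¹ (permVal π⁻¹ v) = v := permVal_apply_inv π⁻¹ hv.1 (le_trans hv.2 hm)
    rwa [inv_inv] at this

lemma eqt (n m : ℕ) (hm : m ≤ n) (π : Equiv.Perm (Fin n)) :
    ((Finset.Icc 1 n).filter fun j => j ≤ m ∧ m < permVal π j).card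
      = ((Finset.Icc 1 n).filter fun j => m < j ∧ permVal π j ≤ m).card := by
  have e1 : ((Finset.Icc 1 n).filter fun j => j ≤ m) = Finset.Icc 1 m := by
    ext j; simp only [Finset.mem_filter, Finset.mem_Icc]; omega
  have k1 : (((Finset.Icc 1 n).filter fun j => j ≤ m).filter fun j => permVal π j ≤ m).card
      + (((Finset.Icc 1 n).filter fun j => j ≤ m).filter fun j => ¬ permVal π j ≤ m).card = m := by
    rw [Finset.card_filter_add_card_filter_not, e1]; simp
  have k2 : (((Finset.Icc 1 n).filter fun j => permVal π j ≤ m).filter fun j => j ≤ m).card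
      + (((Finset.Icc 1 n).filter fun j => permVal π j ≤ m).filter fun j => ¬ j ≤ m).card = m := by
    rw [Finset.card_filter_add_card_filter_not, card_pv_le n m hm π]
  rw [Finset.filter_filter] at k1 k2
  rw [Finset.filter_filter] at k1 k2
  have e2 : ((Finset.Icc 1 n).filter fun j => j ≤ m ∧ permVal π j ≤ m)
      = ((Finset.Icc 1 n).filter fun j => permVal π j ≤ m ∧ j ≤ m) := by
    apply Finset.filter_congr; intro j _; constructor <;> exact fun h => ⟨h.2, h.1⟩
  have e3 : ((Finset.Icc 1 n).filter fun j => j ≤ m ∧ m < permVal π j)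
      = ((Finset.Icc 1 n).filter fun j => j ≤ m ∧ ¬ permVal π j ≤ m) := by
    apply Finset.filter_congr; intro j _; constructor <;> exact fun h => ⟨h.1, by omega⟩
  have e4 : ((Finset.Icc 1 n).filter fun j => m < j ∧ permVal π j ≤ m)
      = ((Finset.Icc 1 n).filter fun j => permVal π j ≤ m ∧ ¬ j ≤ m) := by
    apply Finset.filter_congr; intro j _; constructor
    · exact fun h => ⟨h.2, by omega⟩
    · exact fun h => ⟨by omega, h.1⟩
  rw [e3, e4]
  rw [e2] at k1
  omega

lemma est_eq_exc (n m : ℕ) (hm : m ≤ n) (π : Equiv.Perm (Fin n)) :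
    Est n m π = excNum (wP n m * π * wP n m) := by
  have hpv : ∀ j, 1 ≤ j → j ≤ n →
      permVal (wP n m * π * wP n m) (wv n m j) = wv n m (permVal π j) := by
    intro j h1 h2
    have hw := wv_mem (n := n) (m := m) hm h1 h2
    have hp := permVal_mem π h1 h2
    rw [permVal_mul _ _ hw.1 hw.2, permVal_wP hw.1 hw.2, wv_wv hm h1 h2,
      permVal_mul _ _ h1 h2, permVal_wP hp.1 hp.2]
  -- excedance set of the conjugate, reindexed by wv
  have hexc : ((Finset.Icc 1 n).filter fun j => wv n m j < wv n m (permVal π j)).card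
      = excNum (wP n m * π * wP n m) := by
    unfold excNum
    apply Finset.card_nbij' (i := fun j => wv n m j) (j := fun j => wv n m j)
    · intro a ha
      simp only [Finset.mem_coe, Finset.mem_filter, Finset.mem_Icc] at ha ⊢
      have hw := wv_mem (n := n) (m := m) hm ha.1.1 ha.1.2
      refine ⟨⟨hw.1, hw.2⟩, ?_⟩
      rw [hpv a ha.1.1 ha.1.2]
      exact ha.2
    · intro a ha
      simp only [Finset.mem_coe, Finset.mem_filter, Finset.mem_Icc] at ha ⊢
      have hw := wv_mem (n := n) (m := m) hm ha.1.1 ha.1.2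
      refine ⟨⟨hw.1, hw.2⟩, ?_⟩
      have h4 := hpv (wv n m a) hw.1 hw.2
      rw [wv_wv hm ha.1.1 ha.1.2] at h4
      rw [wv_wv hm ha.1.1 ha.1.2, ← h4]
      exact ha.2
    · intro a ha
      simp only [Finset.mem_coe, Finset.mem_filter, Finset.mem_Icc] at ha
      exact wv_wv hm ha.1.1 ha.1.2
    · intro a ha
      simp only [Finset.mem_coe, Finset.mem_filter, Finset.mem_Icc] at ha
      exact wv_wv hm ha.1.1 ha.1.2
  rw [← hexc]
  unfold Est
  -- split both sides into three disjoint pieces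
  have hsplitA : ((Finset.Icc 1 n).filter fun j => wv n m j < wv n m (permVal π j))
      = ((Finset.Icc 1 n).filter fun j =>
          (j ≤ m ∧ permVal π j ≤ m ∧ j < permVal π j) ∨ ((j ≤ m ∧ m < permVal π j) ∨
          (m < j ∧ m < permVal π j ∧ permVal π j < j))) := by
    apply Finset.filter_congr
    intro j hj
    simp only [Finset.mem_Icc] at hj
    have hp := permVal_mem π hj.1 hj.2
    unfold wv
    split_ifs <;> constructor <;> intro h <;> omega
  have hsplitB : ((Finset.Icc 1 n).filter fun j => sInt m j < sInt m (permVal π j))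
      = ((Finset.Icc 1 n).filter fun j =>
          (j ≤ m ∧ permVal π j ≤ m ∧ j < permVal π j) ∨ ((m < j ∧ permVal π j ≤ m) ∨
          (m < j ∧ m < permVal π j ∧ permVal π j < j))) := by
    apply Finset.filter_congr
    intro j hj
    simp only [Finset.mem_Icc] at hj
    have hp := permVal_mem π hj.1 hj.2
    unfold sInt
    split_ifs <;> constructor <;> intro h <;> omega
  rw [hsplitA, hsplitB, Finset.filter_or, Finset.filter_or, Finset.filter_or, Finset.filter_or]
  rw [Finset.card_union_of_disjoint, Finset.card_union_of_disjoint,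
    Finset.card_union_of_disjoint, Finset.card_union_of_disjoint]
  · rw [eqt n m hm π]
  · rw [Finset.disjoint_filter]; intro j _ h1 h2; omega
  · rw [Finset.disjoint_union_right]
    constructor <;> (rw [Finset.disjoint_filter]; intro j _ h1 h2; omega)
  · rw [Finset.disjoint_filter]; intro j _ h1 h2; omega
  · rw [Finset.disjoint_union_right]
    constructor <;> (rw [Finset.disjoint_filter]; intro j _ h1 h2; omega)

lemma conj_conj (n m : ℕ) (π : Equiv.Perm (Fin n)) :
    wP n m * (wP n m * π * wP n m) * wP n m = π := by
  have h := wP_mul_wP n m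
  calc wP n m * (wP n m * π * wP n m) * wP n m
      = (wP n m * wP n m) * π * (wP n m * wP n m) := by group
    _ = π := by rw [h]; group

lemma conj_mem_NF (n m : ℕ) (hm : m ≤ n) (π : Equiv.Perm (Fin n)) (hπ : π ∈ NF n m) :
    wP n m * π * wP n m ∈ NF n m := by
  simp only [NF, Finset.mem_filter, Finset.mem_univ, true_and, Finset.mem_Icc] at hπ ⊢
  intro j hj
  have h1 : (1 : ℕ) ≤ j := hj.1
  have h2 : j ≤ n := le_trans hj.2 hm
  have hwj : wv n m j = j := by unfold wv; rw [if_pos hj.2]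
  have hval : permVal (wP n m * π * wP n m) j = wv n m (permVal π j) := by
    have hp := permVal_mem π h1 h2
    rw [permVal_mul _ _ h1 h2, permVal_wP h1 h2, hwj, permVal_mul _ _ h1 h2,
      permVal_wP hp.1 hp.2]
  rw [hval]
  intro hcon
  have hp := permVal_mem π h1 h2
  have hne := hπ j hj
  unfold wv at hcon
  split_ifs at hcon <;> omega

lemma sum_est_eq_C (n m : ℕ) (hm : m ≤ n) (x : ℝ) :
    ∑ π ∈ NF n m, x ^ Est n m π = C n m x := by
  unfold C
  apply Finset.sum_nbij' (i := fun π => wP n m * π * wP n m)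
    (j := fun π => wP n m * π * wP n m)
  · exact fun π hπ => conj_mem_NF n m hm π hπ
  · exact fun π hπ => conj_mem_NF n m hm π hπ
  · exact fun π _ => conj_conj n m π
  · exact fun π _ => conj_conj n m π
  · intro π _
    rw [est_eq_exc n m hm π]

end DBAux


namespace DBAux

open Equiv Finset

/-! ### `dBni n 0` -/

lemma dB_zero (n : ℕ) (x : ℝ) : dBni n 0 x = C n n x := by
  rw [dBni, if_pos rfl]
  unfold dpoly C NF
  have hset : (Finset.univ.filter fun π : Equiv.Perm (Fin n) => fixNum π = 0)
      = Finset.univ.filter fun π => ∀ j ∈ Finset.Icc 1 n, permVal π j ≠ j := by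
    ext π
    simp only [Finset.mem_filter, Finset.mem_univ, true_and]
    rw [fixNum, Finset.card_eq_zero, Finset.filter_eq_empty_iff]
  rw [hset]

/-! ### Inserting a fixed point at position `m + 1` -/

/-- order isomorphism between `Fin N` and the complement of `⟨m⟩` in `Fin (N+1)` -/
def eIso (N m : ℕ) (hm : m ≤ N) : Fin N ≃ {k : Fin (N + 1) // k ≠ ⟨m, by omega⟩} where
  toFun a := ⟨⟨if a.val < m then a.val else a.val + 1, by have := a.isLt; split_ifs <;> omega⟩,
    by
      intro hc
      have hv : (if a.val < m then a.val else a.val + 1) = m := congrArg Fin.val hc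
      have := a.isLt
      split_ifs at hv <;> omega⟩
  invFun k := ⟨if k.1.val < m then k.1.val else k.1.val - 1, by
    have h1 := k.1.isLt
    have h2 : k.1.val ≠ m := fun h => k.2 (Fin.ext h)
    split_ifs <;> omega⟩
  left_inv a := by
    have ha := a.isLt
    apply Fin.ext
    show (if (if a.val < m then a.val else a.val + 1) < m then
      (if a.val < m then a.val else a.val + 1) else (if a.val < m then a.val else a.val + 1) - 1)
      = a.val
    split_ifs <;> omega
  right_inv k := by
    have h1 := k.1.isLt
    have h2 : k.1.val ≠ m := fun h => k.2 (Fin.ext h)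
    apply Subtype.ext
    apply Fin.ext
    show (if (if k.1.val < m then k.1.val else k.1.val - 1) < m then
      (if k.1.val < m then k.1.val else k.1.val - 1)
      else (if k.1.val < m then k.1.val else k.1.val - 1) + 1) = k.1.val
    split_ifs <;> omega

lemma eIso_val (N m : ℕ) (hm : m ≤ N) (a : Fin N) :
    (((eIso N m hm) a) : Fin (N + 1)).val = if a.val < m then a.val else a.val + 1 := rfl

/-- insertion of a fixed point at (0-based) position `m` -/
def insP (N m : ℕ) (hm : m ≤ N) (τ : Equiv.Perm (Fin N)) : Equiv.Perm (Fin (N + 1)) :=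
  Equiv.Perm.ofSubtype ((eIso N m hm).permCongr τ)

lemma insP_fix (N m : ℕ) (hm : m ≤ N) (τ : Equiv.Perm (Fin N)) :
    insP N m hm τ ⟨m, by omega⟩ = ⟨m, by omega⟩ :=
  Equiv.Perm.ofSubtype_apply_of_not_mem
    (p := fun k : Fin (N + 1) => k ≠ ⟨m, by omega⟩) _ (not_not_intro rfl)

lemma insP_lift (N m : ℕ) (hm : m ≤ N) (τ : Equiv.Perm (Fin N)) (a : Fin N) :
    insP N m hm τ ((eIso N m hm) a).1 = ((eIso N m hm) (τ a)).1 := by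
  unfold insP
  have h0 : Equiv.Perm.ofSubtype ((eIso N m hm).permCongr τ) (((eIso N m hm) a).1)
      = ((eIso N m hm).permCongr τ) ⟨((eIso N m hm) a).1, ((eIso N m hm) a).2⟩ :=
    Equiv.Perm.ofSubtype_apply_of_mem
      (p := fun k : Fin (N + 1) => k ≠ ⟨m, by omega⟩) _ (((eIso N m hm) a).2)
  rw [h0]
  have h1 : (⟨((eIso N m hm) a).1, ((eIso N m hm) a).2⟩ :
      {k : Fin (N + 1) // k ≠ ⟨m, by omega⟩}) = (eIso N m hm) a := rfl
  rw [h1, Equiv.permCongr_apply]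
  simp

/-- the hypothesis needed for `subtypePerm` -/
lemma subHyp {N m : ℕ} (hm : m ≤ N) (π : Equiv.Perm (Fin (N + 1)))
    (hfix : π ⟨m, by omega⟩ = ⟨m, by omega⟩) :
    ∀ x : Fin (N + 1), π x ≠ ⟨m, by omega⟩ ↔ x ≠ ⟨m, by omega⟩ := by
  intro x
  have h : π x = ⟨m, by omega⟩ ↔ x = ⟨m, by omega⟩ := by
    conv_lhs => rw [← hfix]
    exact Equiv.apply_eq_iff_eq π
  exact not_congr h

/-- deletion of a fixed point at (0-based) position `m` -/
def delP (N m : ℕ) (hm : m ≤ N) (π : Equiv.Perm (Fin (N + 1)))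
    (hfix : π ⟨m, by omega⟩ = ⟨m, by omega⟩) : Equiv.Perm (Fin N) :=
  (eIso N m hm).permCongr.symm (π.subtypePerm (subHyp hm π hfix))

lemma insP_delP (N m : ℕ) (hm : m ≤ N) (π : Equiv.Perm (Fin (N + 1)))
    (hfix : π ⟨m, by omega⟩ = ⟨m, by omega⟩) :
    insP N m hm (delP N m hm π hfix) = π := by
  have key : insP N m hm (delP N m hm π hfix)
      = Equiv.Perm.ofSubtype (π.subtypePerm (p := fun x : Fin (N + 1) => x ≠ ⟨m, by omega⟩) (subHyp hm π hfix)) := by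
    unfold insP delP
    rw [Equiv.apply_symm_apply]
  rw [key]
  apply Equiv.ext
  intro k
  by_cases hk : k = (⟨m, by omega⟩ : Fin (N + 1))
  · have h0 : Equiv.Perm.ofSubtype (π.subtypePerm (p := fun x : Fin (N + 1) => x ≠ ⟨m, by omega⟩) (subHyp hm π hfix)) k = k :=
      Equiv.Perm.ofSubtype_apply_of_not_mem
        (p := fun k : Fin (N + 1) => k ≠ ⟨m, by omega⟩) _ (not_not_intro hk)
    rw [h0, hk, hfix]
  · have h0 : Equiv.Perm.ofSubtype (π.subtypePerm (p := fun x : Fin (N + 1) => x ≠ ⟨m, by omega⟩) (subHyp hm π hfix)) k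
        = (π.subtypePerm (p := fun x : Fin (N + 1) => x ≠ ⟨m, by omega⟩) (subHyp hm π hfix)) ⟨k, hk⟩ :=
      Equiv.Perm.ofSubtype_apply_of_mem
        (p := fun x : Fin (N + 1) => x ≠ ⟨m, by omega⟩) _ hk
    rw [h0]
    rfl

lemma delP_insP (N m : ℕ) (hm : m ≤ N) (τ : Equiv.Perm (Fin N))
    (hfix : insP N m hm τ ⟨m, by omega⟩ = ⟨m, by omega⟩) :
    delP N m hm (insP N m hm τ) hfix = τ := by
  apply Equiv.ext
  intro a
  unfold delP
  rw [Equiv.permCongr_symm_apply]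
  have h1 : (insP N m hm τ).subtypePerm (subHyp hm _ hfix) ((eIso N m hm) a)
      = (eIso N m hm) (τ a) := by
    apply Subtype.ext
    rw [Equiv.Perm.subtypePerm_apply]
    exact insP_lift N m hm τ a
  rw [h1, Equiv.symm_apply_apply]

/-! ### `permVal` of `insP` -/

lemma insP_val_mid (N m : ℕ) (hm : m ≤ N) (τ : Equiv.Perm (Fin N)) :
    permVal (insP N m hm τ) (m + 1) = m + 1 := by
  have h : permVal (insP N m hm τ) ((⟨m, by omega⟩ : Fin (N + 1)).val + 1)
      = ((insP N m hm τ) ⟨m, by omega⟩).val + 1 := permVal_fin _ _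
  rw [insP_fix] at h
  exact h

lemma insP_val_low (N m : ℕ) (hm : m ≤ N) (τ : Equiv.Perm (Fin N)) {j : ℕ}
    (h1 : 1 ≤ j) (h2 : j ≤ m) :
    permVal (insP N m hm τ) j
      = if permVal τ j ≤ m then permVal τ j else permVal τ j + 1 := by
  have hjN : j ≤ N := le_trans h2 hm
  have ha : (0:ℕ) = 0 := rfl
  let a : Fin N := ⟨j - 1, by omega⟩
  have hlift : (⟨j - 1, by omega⟩ : Fin (N + 1)) = ((eIso N m hm) a).1 := by
    apply Fin.ext
    rw [eIso_val]
    show j - 1 = if (j - 1 : ℕ) < m then (j - 1 : ℕ) else (j - 1) + 1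
    rw [if_pos (by omega)]
  have hstep : permVal τ j = (τ a).val + 1 := permVal_def τ h1 hjN
  rw [permVal_def _ h1 (by omega), hlift, insP_lift, hstep, eIso_val]
  have := (τ a).isLt
  split_ifs <;> omega

lemma insP_val_high (N m : ℕ) (hm : m ≤ N) (τ : Equiv.Perm (Fin N)) {j : ℕ}
    (h1 : m + 2 ≤ j) (h2 : j ≤ N + 1) :
    permVal (insP N m hm τ) j
      = if permVal τ (j - 1) ≤ m then permVal τ (j - 1) else permVal τ (j - 1) + 1 := by
  let a : Fin N := ⟨j - 2, by omega⟩
  have hlift : (⟨j - 1, by omega⟩ : Fin (N + 1)) = ((eIso N m hm) a).1 := by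
    apply Fin.ext
    rw [eIso_val]
    show j - 1 = if (j - 2 : ℕ) < m then (j - 2 : ℕ) else (j - 2) + 1
    rw [if_neg (by omega)]
    omega
  have hidx : (⟨j - 1 - 1, by omega⟩ : Fin N) = a := by
    apply Fin.ext
    show j - 1 - 1 = j - 2
    omega
  have hstep : permVal τ (j - 1) = (τ a).val + 1 := by
    rw [permVal_def τ (by omega) (by omega), hidx]
  rw [permVal_def _ (by omega) h2, hlift, insP_lift, hstep, eIso_val]
  have := (τ a).isLt
  split_ifs <;> omega

/-! ### `insP` preserves the data -/

lemma insP_mem_NF (N m : ℕ) (hm : m ≤ N) (τ : Equiv.Perm (Fin N)) :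
    insP N m hm τ ∈ NF (N + 1) m ↔ τ ∈ NF N m := by
  simp only [NF, Finset.mem_filter, Finset.mem_univ, true_and, Finset.mem_Icc]
  constructor
  · intro h j hj
    have hh := h j hj
    rw [insP_val_low N m hm τ hj.1 hj.2] at hh
    have hp := permVal_mem τ hj.1 (by omega)
    intro hc
    rw [hc] at hh
    rw [if_pos hj.2] at hh
    exact hh rfl
  · intro h j hj
    rw [insP_val_low N m hm τ hj.1 hj.2]
    have hh := h j hj
    have hp := permVal_mem τ hj.1 (by omega)
    split_ifs with hs
    · exact hh
    · omega

lemma insP_exc (N m : ℕ) (hm : m ≤ N) (τ : Equiv.Perm (Fin N)) :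
    excNum (insP N m hm τ) = excNum τ := by
  unfold excNum
  apply Finset.card_nbij' (i := fun j => if j ≤ m then j else j - 1)
    (j := fun j => if j ≤ m then j else j + 1)
  · intro j hj
    simp only [Finset.mem_coe, Finset.mem_filter, Finset.mem_Icc] at hj ⊢
    have hj1 := hj.1.1
    have hj2 := hj.1.2
    have hjm : j ≠ m + 1 := by
      intro hc
      rw [hc, insP_val_mid N m hm τ] at hj
      omega
    by_cases hle : j ≤ m
    · rw [if_pos hle]
      have := insP_val_low N m hm τ hj1 hle
      rw [this] at hj
      have hp := permVal_mem τ hj1 (le_trans hle hm)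
      refine ⟨⟨hj1, le_trans hle hm⟩, ?_⟩
      have := hj.2
      split_ifs at this <;> omega
    · rw [if_neg hle]
      have hge : m + 2 ≤ j := by omega
      have := insP_val_high N m hm τ hge hj2
      rw [this] at hj
      have hp := permVal_mem τ (k := j - 1) (by omega) (by omega)
      refine ⟨⟨by omega, by omega⟩, ?_⟩
      have h2 := hj.2
      split_ifs at h2 <;> omega
  · intro j hj
    simp only [Finset.mem_coe, Finset.mem_filter, Finset.mem_Icc] at hj ⊢
    have hj1 := hj.1.1
    have hj2 := hj.1.2
    by_cases hle : j ≤ m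
    · rw [if_pos hle]
      refine ⟨⟨hj1, by omega⟩, ?_⟩
      rw [insP_val_low N m hm τ hj1 hle]
      have hp := permVal_mem τ hj1 (le_trans hle hm)
      split_ifs <;> omega
    · rw [if_neg hle]
      refine ⟨⟨by omega, by omega⟩, ?_⟩
      rw [insP_val_high N m hm τ (by omega) (by omega)]
      have hss : j + 1 - 1 = j := by omega
      rw [hss]
      have hp := permVal_mem τ hj1 hj2
      split_ifs <;> omega
  · intro j hj
    simp only [Finset.mem_coe, Finset.mem_filter, Finset.mem_Icc] at hj
    have hjm : j ≠ m + 1 := by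
      intro hc
      rw [hc, insP_val_mid N m hm τ] at hj
      omega
    beta_reduce
    split_ifs with p1 p2 p3 <;> omega
  · intro j hj
    simp only [Finset.mem_coe, Finset.mem_filter, Finset.mem_Icc] at hj
    beta_reduce
    split_ifs with p1 p2 p3 <;> omega

lemma fix_of_pv {N m : ℕ} (hm : m ≤ N) {π : Equiv.Perm (Fin (N + 1))}
    (h : permVal π (m + 1) = m + 1) : π ⟨m, by omega⟩ = ⟨m, by omega⟩ := by
  have h5 : permVal π (m + 1) = (π ⟨m, by omega⟩).val + 1 := permVal_fin π ⟨m, by omega⟩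
  apply Fin.ext
  show (π ⟨m, by omega⟩).val = m
  omega

lemma delP_mem_NF (N m : ℕ) (hm : m ≤ N) (π : Equiv.Perm (Fin (N + 1)))
    (hfix : π ⟨m, by omega⟩ = ⟨m, by omega⟩) (h : π ∈ NF (N + 1) m) :
    delP N m hm π hfix ∈ NF N m := by
  apply (insP_mem_NF N m hm _).mp
  rw [insP_delP N m hm π hfix]
  exact h

/-! ### the recurrence for `C` -/

lemma C_rec (N m : ℕ) (hm : m ≤ N) (x : ℝ) :
    C (N + 1) m x = C (N + 1) (m + 1) x + C N m x := by
  have hsplit : ∑ π ∈ NF (N + 1) m, x ^ excNum π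
      = (∑ π ∈ (NF (N + 1) m).filter (fun π => permVal π (m + 1) = m + 1), x ^ excNum π)
        + ∑ π ∈ (NF (N + 1) m).filter (fun π => ¬ permVal π (m + 1) = m + 1), x ^ excNum π :=
    (Finset.sum_filter_add_sum_filter_not _ _ _).symm
  have hset : (NF (N + 1) m).filter (fun π => ¬ permVal π (m + 1) = m + 1)
      = NF (N + 1) (m + 1) := by
    unfold NF
    rw [Finset.filter_filter]
    ext π
    simp only [Finset.mem_filter, Finset.mem_univ, true_and, Finset.mem_Icc]
    constructor
    · intro h j hj
      by_cases hjm : j ≤ m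
      · exact h.1 j ⟨hj.1, hjm⟩
      · have hj1 : j = m + 1 := by omega
        rw [hj1]
        exact fun hc => h.2 hc
    · intro h
      exact ⟨fun j hj => h j ⟨hj.1, by omega⟩, h (m + 1) ⟨by omega, le_refl _⟩⟩
  have hfixed : ∑ τ ∈ NF N m, x ^ excNum τ
      = ∑ π ∈ (NF (N + 1) m).filter (fun π => permVal π (m + 1) = m + 1), x ^ excNum π := by
    refine Finset.sum_bij' (fun τ _ => insP N m hm τ)
      (fun π hπ => delP N m hm π (fix_of_pv hm (Finset.mem_filter.mp hπ).2))
      ?_ ?_ ?_ ?_ ?_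
    · intro τ hτ
      rw [Finset.mem_filter]
      exact ⟨(insP_mem_NF N m hm τ).mpr hτ, insP_val_mid N m hm τ⟩
    · intro π hπ
      exact delP_mem_NF N m hm π _ (Finset.mem_filter.mp hπ).1
    · intro τ hτ
      apply delP_insP
    · intro π hπ
      apply insP_delP
    · intro τ hτ
      rw [insP_exc N m hm τ]
  show C (N + 1) m x = _
  unfold C
  rw [hsplit, hset, ← hfixed]
  ring

end DBAux


namespace DBAux

open Equiv Finset

/-! ### From signed permutations to permutations -/

/-- underlying permutation of a signed permutation -/
def toPerm {n : ℕ} (σ : Fin n → Fin n × Bool) (h : Function.Injective fun i => (σ i).1) :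
    Equiv.Perm (Fin n) :=
  Equiv.ofBijective _ (Finite.injective_iff_bijective.mp h)

lemma toPerm_apply {n : ℕ} (σ : Fin n → Fin n × Bool) (h : Function.Injective fun i => (σ i).1)
    (a : Fin n) : toPerm σ h a = (σ a).1 := rfl

/-- signed permutation associated to a permutation, letters above `m` negative -/
def toSigned {n : ℕ} (m : ℕ) (π : Equiv.Perm (Fin n)) : Fin n → Fin n × Bool :=
  fun k => (π k, decide (m ≤ (π k).val))

lemma bval_val {n : ℕ} (σ : Fin n → Fin n × Bool) {k : ℕ} (h1 : 1 ≤ k) (h2 : k ≤ n) :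
    bval σ k = if (σ ⟨k - 1, by omega⟩).2 then -(((σ ⟨k - 1, by omega⟩).1 : ℤ) + 1)
      else ((σ ⟨k - 1, by omega⟩).1 : ℤ) + 1 := dif_pos ⟨h1, h2⟩

lemma permVal_toPerm {n : ℕ} (σ : Fin n → Fin n × Bool)
    (h : Function.Injective fun i => (σ i).1) {k : ℕ} (h1 : 1 ≤ k) (h2 : k ≤ n) :
    permVal (toPerm σ h) k = ((σ ⟨k - 1, by omega⟩).1).val + 1 :=
  permVal_def (toPerm σ h) h1 h2

lemma bval_eq_sInt {n i m : ℕ} (hm : m + i = n) (σ : Fin n → Fin n × Bool)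
    (hinj : Function.Injective fun j => (σ j).1)
    (hsign : ∀ k ∈ Finset.Icc 1 n, (bval σ k < 0 ↔ (n : ℤ) - (i : ℤ) < |bval σ k|))
    {k : ℕ} (h1 : 1 ≤ k) (h2 : k ≤ n) :
    bval σ k = sInt m (permVal (toPerm σ hinj) k) := by
  have hs := hsign k (Finset.mem_Icc.mpr ⟨h1, h2⟩)
  rw [bval_val σ h1 h2] at hs ⊢
  rw [permVal_toPerm σ hinj h1 h2]
  have hfv := ((σ ⟨k - 1, by omega⟩).1).isLt
  unfold sInt
  by_cases hb : (σ ⟨k - 1, by omega⟩).2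
  · rw [if_pos hb] at hs ⊢
    have hlt : -((((σ ⟨k - 1, by omega⟩).1 : Fin n) : ℤ) + 1) < 0 := by
      have : (0 : ℤ) ≤ (((σ ⟨k - 1, by omega⟩).1 : Fin n) : ℤ) := Int.natCast_nonneg _
      omega
    have habs := hs.mp hlt
    rw [abs_of_neg hlt] at habs
    rw [if_pos (by omega)]
    push_cast
    ring
  · rw [if_neg hb] at hs ⊢
    have hge : ¬ ((((σ ⟨k - 1, by omega⟩).1 : Fin n) : ℤ) + 1 < 0) := by
      have : (0 : ℤ) ≤ (((σ ⟨k - 1, by omega⟩).1 : Fin n) : ℤ) := Int.natCast_nonneg _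
      omega
    have hnn : (0 : ℤ) ≤ (((σ ⟨k - 1, by omega⟩).1 : Fin n) : ℤ) := Int.natCast_nonneg _
    have habs : ¬ ((n : ℤ) - (i : ℤ) < (((σ ⟨k - 1, by omega⟩).1 : Fin n) : ℤ) + 1) := by
      intro hcon
      have h9 := hs.mpr (by rw [abs_of_nonneg (by omega)]; exact hcon)
      omega
    rw [if_neg (by omega)]
    push_cast
    ring

lemma bval_toSigned {n : ℕ} (m : ℕ) (π : Equiv.Perm (Fin n)) {k : ℕ}
    (h1 : 1 ≤ k) (h2 : k ≤ n) :
    bval (toSigned m π) k = sInt m (permVal π k) := by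
  rw [bval_val _ h1 h2, permVal_def π h1 h2]
  unfold toSigned sInt
  simp only []
  have hfv := (π ⟨k - 1, by omega⟩).isLt
  by_cases hb : m ≤ (π ⟨k - 1, by omega⟩).val
  · rw [if_pos (by simpa using hb), if_pos (by omega)]
    push_cast
    omega
  · rw [if_neg (by simpa using hb), if_neg (by omega)]
    push_cast
    omega

/-! ### transfer of the statistics -/

lemma bfix_iff {n m : ℕ} (hm : m ≤ n) (σ : Fin n → Fin n × Bool) (π : Equiv.Perm (Fin n))
    (hbv : ∀ k, 1 ≤ k → k ≤ n → bval σ k = sInt m (permVal π k)) :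
    bfixNum σ = 0 ↔ π ∈ NF n m := by
  rw [bfixNum, Finset.card_eq_zero, Finset.filter_eq_empty_iff]
  simp only [NF, Finset.mem_filter, Finset.mem_univ, true_and]
  constructor
  · intro h j hj
    rw [Finset.mem_Icc] at hj
    have hj2 : j ≤ n := le_trans hj.2 hm
    intro hc
    apply h (Finset.mem_Icc.mpr ⟨hj.1, hj2⟩)
    rw [hbv j hj.1 hj2, hc]
    unfold sInt
    rw [if_neg (by omega)]
  · intro h k hk
    rw [Finset.mem_Icc] at hk
    rw [hbv k hk.1 hk.2]
    have hp := permVal_mem π hk.1 hk.2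
    unfold sInt
    split_ifs with hs
    · intro hc
      omega
    · intro hc
      have hpk : permVal π k = k := by omega
      have hkm : k ≤ m := by omega
      exact h k (Finset.mem_Icc.mpr ⟨hk.1, hkm⟩) hpk

lemma bexc_eq_Est {n m : ℕ} (hm : m ≤ n) (σ : Fin n → Fin n × Bool) (π : Equiv.Perm (Fin n))
    (hbv : ∀ k, 1 ≤ k → k ≤ n → bval σ k = sInt m (permVal π k)) :
    bexcNum σ = Est n m π := by
  unfold bexcNum Est
  have hstep : ((Finset.Icc 1 n).filter fun k => bval σ k < bval σ (bval σ k).natAbs)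
      = (Finset.Icc 1 n).filter
          fun k => sInt m (permVal π k) < sInt m (permVal π (permVal π k)) := by
    apply Finset.filter_congr
    intro k hk
    rw [Finset.mem_Icc] at hk
    have hp := permVal_mem π hk.1 hk.2
    have h1 := hbv k hk.1 hk.2
    have habs : (bval σ k).natAbs = permVal π k := by
      rw [h1]
      unfold sInt
      split_ifs <;> simp
    rw [habs, h1, hbv (permVal π k) hp.1 hp.2]
  rw [hstep]
  apply Finset.card_nbij' (i := fun k => permVal π k) (j := fun k => permVal π⁻¹ k)
  · intro a ha
    simp only [Finset.mem_coe, Finset.mem_filter, Finset.mem_Icc] at ha ⊢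
    have hp := permVal_mem π ha.1.1 ha.1.2
    exact ⟨⟨hp.1, hp.2⟩, ha.2⟩
  · intro a ha
    simp only [Finset.mem_coe, Finset.mem_filter, Finset.mem_Icc] at ha ⊢
    have hp := permVal_mem π⁻¹ ha.1.1 ha.1.2
    have hinv : permVal π (permVal π⁻¹ a) = a := by
      have := permVal_apply_inv π⁻¹ ha.1.1 ha.1.2
      rwa [inv_inv] at this
    refine ⟨⟨hp.1, hp.2⟩, ?_⟩
    rw [hinv]
    exact ha.2
  · intro a ha
    simp only [Finset.mem_coe, Finset.mem_filter, Finset.mem_Icc] at ha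
    exact permVal_apply_inv π ha.1.1 ha.1.2
  · intro a ha
    simp only [Finset.mem_coe, Finset.mem_filter, Finset.mem_Icc] at ha
    have := permVal_apply_inv π⁻¹ ha.1.1 ha.1.2
    rwa [inv_inv] at this

/-! ### the main bijection for positive `i` -/

/-- the summation set of `dBni` for positive `i` -/
def Dset (n i : ℕ) : Finset (Fin n → Fin n × Bool) :=
  (BPerms n).filter (fun σ => bfixNum σ = 0 ∧
    ∀ k ∈ Finset.Icc 1 n, (bval σ k < 0 ↔ (n : ℤ) - (i : ℤ) < |bval σ k|))

lemma memD_iff {n i : ℕ} {σ : Fin n → Fin n × Bool} :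
    σ ∈ Dset n i ↔ (Function.Injective fun j => (σ j).1) ∧ bfixNum σ = 0 ∧
      ∀ k ∈ Finset.Icc 1 n, (bval σ k < 0 ↔ (n : ℤ) - (i : ℤ) < |bval σ k|) := by
  unfold Dset BPerms
  simp only [Finset.mem_filter, Finset.mem_univ, true_and]

lemma dBni_pos_eq (n i : ℕ) (hi : i ≠ 0) (x : ℝ) :
    dBni n i x = ∑ σ ∈ Dset n i, x ^ bexcNum σ := by
  rw [dBni, if_neg hi]
  apply Finset.sum_congr _ (fun _ _ => rfl)
  unfold Dset
  ext σ
  simp only [Finset.mem_filter]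

lemma dB_pos (n i : ℕ) (hi1 : 1 ≤ i) (hin : i ≤ n) (x : ℝ) :
    dBni n i x = ∑ π ∈ NF n (n - i), x ^ Est n (n - i) π := by
  have hmn : n - i ≤ n := by omega
  have hmi : (n - i) + i = n := by omega
  rw [dBni_pos_eq n i (by omega) x]
  refine Finset.sum_bij'
    (fun σ hσ => toPerm σ (memD_iff.mp hσ).1)
    (fun π _ => toSigned (n - i) π) ?_ ?_ ?_ ?_ ?_
  · intro σ hσ
    obtain ⟨hinj, hfx, hsg⟩ := memD_iff.mp hσ
    exact (bfix_iff hmn σ _ (fun k hk1 hk2 => bval_eq_sInt hmi σ _ hsg hk1 hk2)).mp hfx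
  · intro π hπ
    refine memD_iff.mpr ⟨fun a b hab => π.injective hab, ?_, ?_⟩
    · exact (bfix_iff hmn (toSigned (n - i) π) π
        (fun k hk1 hk2 => bval_toSigned (n - i) π hk1 hk2)).mpr hπ
    · intro k hk
      rw [Finset.mem_Icc] at hk
      rw [bval_toSigned (n - i) π hk.1 hk.2]
      have hp := permVal_mem π hk.1 hk.2
      unfold sInt
      split_ifs with hs
      · constructor
        · intro _
          rw [abs_of_neg (by omega : -((permVal π k : ℕ) : ℤ) < 0)]
          push_cast
          omega
        · intro _
          omega
      · constructor
        · intro hc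
          omega
        · intro hc
          rw [abs_of_nonneg (by positivity : (0:ℤ) ≤ ((permVal π k : ℕ) : ℤ))] at hc
          omega
  · intro σ hσ
    obtain ⟨hinj, hfx, hsg⟩ := memD_iff.mp hσ
    funext k
    have hk := k.isLt
    have hs := hsg (k.val + 1) (Finset.mem_Icc.mpr ⟨by omega, by omega⟩)
    have hidx : (⟨k.val + 1 - 1, by omega⟩ : Fin n) = k := by
      apply Fin.ext
      show k.val + 1 - 1 = k.val
      omega
    have hb : bval σ (k.val + 1) = if (σ k).2 then -(((σ k).1 : ℤ) + 1)
        else ((σ k).1 : ℤ) + 1 := by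
      rw [bval_val σ (by omega) (by omega), hidx]
    rw [hb] at hs
    have hfv := ((σ k).1).isLt
    have hnn : (0 : ℤ) ≤ (((σ k).1 : Fin n) : ℤ) := Int.natCast_nonneg _
    show toSigned (n - i) (toPerm σ (memD_iff.mp hσ).1) k = σ k
    unfold toSigned
    rw [toPerm_apply]
    have hsnd : decide ((n - i) ≤ ((σ k).1).val) = (σ k).2 := by
      by_cases hb2 : (σ k).2
      · rw [if_pos hb2] at hs
        have h3 := hs.mp (by omega)
        rw [abs_of_neg (by omega : -((((σ k).1 : Fin n) : ℤ) + 1) < 0)] at h3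
        rw [hb2, decide_eq_true_iff]
        omega
      · rw [if_neg hb2] at hs
        have h3 : ¬ ((n : ℤ) - (i : ℤ) < (((σ k).1 : Fin n) : ℤ) + 1) := by
          intro hc
          have h9 := hs.mpr (by rw [abs_of_nonneg (by omega)]; exact hc)
          omega
        rw [Bool.not_eq_true] at hb2
        rw [hb2, decide_eq_false_iff_not]
        omega
    rw [hsnd]
  · intro π hπ
    apply Equiv.ext
    intro a
    rfl
  · intro σ hσ
    obtain ⟨hinj, hfx, hsg⟩ := memD_iff.mp hσ
    congr 1
    exact bexc_eq_Est hmn σ _ (fun k hk1 hk2 => bval_eq_sInt hmi σ _ hsg hk1 hk2)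

/-! ### combining -/

lemma dB_eq_C (n i : ℕ) (hin : i ≤ n) (x : ℝ) : dBni n i x = C n (n - i) x := by
  by_cases h0 : i = 0
  · subst h0
    rw [Nat.sub_zero]
    exact dB_zero n x
  · rw [dB_pos n i (by omega) hin x]
    exact sum_est_eq_C n (n - i) (by omega) x

end DBAux

theorem stmt0 : ∀ n : ℕ, 1 ≤ n → ∀ i : ℕ, 1 ≤ i → i ≤ n → ∀ x : ℝ,
    dBni n i x = dBni n (i - 1) x + dBni (n - 1) (i - 1) x := by
  intro n hn i hi1 hin x
  obtain ⟨N, rfl⟩ : ∃ N, n = N + 1 := ⟨n - 1, by omega⟩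
  rw [DBAux.dB_eq_C (N + 1) i hin x, DBAux.dB_eq_C (N + 1) (i - 1) (by omega) x,
    DBAux.dB_eq_C (N + 1 - 1) (i - 1) (by omega) x]
  have e0 : N + 1 - 1 = N := rfl
  rw [e0]
  have e1 : N + 1 - (i - 1) = (N + 1 - i) + 1 := by omega
  have e2 : N - (i - 1) = N + 1 - i := by omega
  rw [e1, e2]
  exact DBAux.C_rec N (N + 1 - i) (by omega) x

end
end

section
/- Let γ_{n,i,j} be the number of simsun permutations of the second kind of [n] with exactly i fixed points and j excedances (with the convention γ_{n,i,j} = 0 if i < 0 or j < 0). Then for all n ≥ 0 and all integers i, j ≥ 0: γ_{n+1,i,j} = γ_{n,i-1,j} + (1+i) γ_{n,i+1,j-1} + j γ_{n,i,j} + (n-i-2j+2) γ_{n,i,j-1}, and γ_{0,0,0} = 1 while γ_{0,i,j} = 0 for (i,j) ≠ (0,0). -/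
open scoped Classical
open Finset

noncomputable section

/-- the number of simsun permutations of the second kind of `[n]` with `i` fixed points and
`j` excedances, with the convention that it vanishes for `i < 0` or `j < 0` -/
def gammaZ (n : ℕ) (i j : ℤ) : ℤ :=
  if 0 ≤ i ∧ 0 ≤ j then
    (((Finset.univ : Finset (Equiv.Perm (Fin n))).filter fun π =>
      Simsun2 π ∧ fixNum π = i.toNat ∧ excNum π = j.toNat).card : ℤ)
  else 0

theorem Equiv.Perm.apply_inv_self {α : Type*} (f : Equiv.Perm α) (x : α) : f (f⁻¹ x) = x :=
  f.apply_symm_apply x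

theorem Equiv.Perm.inv_apply_self {α : Type*} (f : Equiv.Perm α) (x : α) : f⁻¹ (f x) = x :=
  f.symm_apply_apply x

namespace SS3Aux

open Equiv Finset

/-! ### basic permVal lemmas -/

lemma permVal_def {m : ℕ} (σ : Equiv.Perm (Fin m)) {v : ℕ} (h1 : 1 ≤ v) (h2 : v ≤ m)
    (hp : v - 1 < m) : permVal σ v = (σ ⟨v - 1, hp⟩).val + 1 := dif_pos ⟨h1, h2⟩

lemma permVal_coe {m : ℕ} (σ : Equiv.Perm (Fin m)) (x : Fin m) :
    permVal σ ((x : ℕ) + 1) = (σ x : ℕ) + 1 := by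
  have hx : 1 ≤ (x : ℕ) + 1 ∧ (x : ℕ) + 1 ≤ m := ⟨Nat.le_add_left _ _, x.isLt⟩
  rw [permVal, dif_pos hx]
  rfl

lemma permVal_range {m : ℕ} (σ : Equiv.Perm (Fin m)) {v : ℕ} (h1 : 1 ≤ v) (h2 : v ≤ m) :
    1 ≤ permVal σ v ∧ permVal σ v ≤ m := by
  rw [permVal, dif_pos ⟨h1, h2⟩]
  exact ⟨Nat.le_add_left _ _, (σ _).isLt⟩

lemma permVal_pow {m : ℕ} (σ : Equiv.Perm (Fin m)) (k : ℕ) :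
    ∀ {v : ℕ}, 1 ≤ v → v ≤ m → permVal (σ ^ k) v = (permVal σ)^[k] v := by
  induction k with
  | zero =>
    intro v h1 h2
    rw [pow_zero, Function.iterate_zero, id_eq, permVal_def 1 h1 h2 (by omega)]
    simp only [Equiv.Perm.one_apply]
    omega
  | succ k ih =>
    intro v h1 h2
    have hr := permVal_range σ h1 h2
    have hp : v - 1 < m := by omega
    rw [Function.iterate_succ_apply, ← ih hr.1 hr.2,
      permVal_def (σ ^ (k + 1)) h1 h2 hp, permVal_def σ h1 h2 hp, permVal_coe (σ ^ k),
      pow_succ, Equiv.Perm.mul_apply]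

lemma permVal_inv_permVal {m : ℕ} (σ : Equiv.Perm (Fin m)) {v : ℕ} (h1 : 1 ≤ v) (h2 : v ≤ m) :
    permVal σ⁻¹ (permVal σ v) = v := by
  have hx : v = ((⟨v - 1, by omega⟩ : Fin m) : ℕ) + 1 := by simp; omega
  rw [hx, permVal_coe, permVal_coe, Equiv.Perm.inv_apply_self]

/-! ### pigeonhole return -/

lemma exists_return {m : ℕ} (π : Equiv.Perm (Fin m)) {v : ℕ} (h1 : 1 ≤ v) (h2 : v ≤ m) :
    ∃ r, 0 < r ∧ r ≤ m ∧ (permVal π)^[r] v = v := by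
  have hm : 0 < m := by omega
  set x : Fin m := ⟨v - 1, by omega⟩ with hxdef
  have hcard : (Finset.univ : Finset (Fin m)).card < (Finset.range (m + 1)).card := by
    simp
  obtain ⟨a, ha, b, hb, hab, hfab⟩ :=
    Finset.exists_ne_map_eq_of_card_lt_of_maps_to hcard
      (f := fun j => (π ^ j) x) (fun a _ => Finset.mem_univ _)
  rcases Nat.lt_or_ge a b with h | h
  · refine ⟨b - a, by omega, by simp at hb; omega, ?_⟩
    have hsp : (π ^ a) ((π ^ (b - a)) x) = (π ^ a) x := by
      rw [← Equiv.Perm.mul_apply, ← pow_add]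
      rw [show a + (b - a) = b by omega]
      exact hfab.symm
    have hx : (π ^ (b - a)) x = x := (π ^ a).injective hsp
    have hvv := permVal_pow π (b - a) h1 h2
    rw [← hvv, permVal_def (π ^ (b - a)) h1 h2 (by omega)]
    show ((π ^ (b - a)) x).val + 1 = v
    rw [hx]
    show v - 1 + 1 = v
    omega
  · have hab' : a ≠ b := hab
    have h' : b < a := by omega
    refine ⟨a - b, by omega, by simp at ha; omega, ?_⟩
    have hsp : (π ^ b) ((π ^ (a - b)) x) = (π ^ b) x := by
      rw [← Equiv.Perm.mul_apply, ← pow_add]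
      rw [show b + (a - b) = a by omega]
      exact hfab
    have hx : (π ^ (a - b)) x = x := (π ^ b).injective hsp
    have hvv := permVal_pow π (a - b) h1 h2
    rw [← hvv, permVal_def (π ^ (a - b)) h1 h2 (by omega)]
    show ((π ^ (a - b)) x).val + 1 = v
    rw [hx]
    show v - 1 + 1 = v
    omega

/-! ### removeVal characterization -/

lemma removeVal_eq_of_least {m : ℕ} (π : Equiv.Perm (Fin m)) (k : ℕ) {v L : ℕ}
    (hv1 : 1 ≤ v) (hvT : v ≤ m - k) (hL : 0 < L)
    (hLle : (permVal π)^[L] v ≤ m - k)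
    (hmin : ∀ j, 0 < j → j < L → m - k < (permVal π)^[j] v) :
    removeVal π k v = (permVal π)^[L] v := by
  have hvm : v ≤ m := by omega
  obtain ⟨r, hr0, hrm, hrv⟩ := exists_return π hv1 hvm
  have hLm : L ≤ m := by
    by_contra hc
    have := hmin r hr0 (by omega)
    omega
  set s := (Finset.Icc 1 m).filter (fun mm => permVal (π ^ mm) v ≤ m - k) with hs
  have hLs : L ∈ s := by
    rw [hs, Finset.mem_filter, Finset.mem_Icc]
    exact ⟨⟨hL, hLm⟩, by rw [permVal_pow π L hv1 hvm]; exact hLle⟩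
  have hsmin : s.min = (L : WithTop ℕ) := by
    apply le_antisymm (Finset.min_le hLs)
    apply Finset.le_min
    intro b hb
    rw [hs, Finset.mem_filter, Finset.mem_Icc] at hb
    rw [permVal_pow π b hv1 hvm] at hb
    have : L ≤ b := by
      by_contra hc
      have := hmin b (by omega) (by omega)
      omega
    exact_mod_cast this
  rw [removeVal, ← hs, hsmin]
  exact permVal_pow π L hv1 hvm

lemma removeVal_zero {m : ℕ} (π : Equiv.Perm (Fin m)) {v : ℕ} (h1 : 1 ≤ v) (h2 : v ≤ m) :
    removeVal π 0 v = permVal π v := by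
  have := removeVal_eq_of_least π 0 h1 (by omega) Nat.one_pos
    (by simpa using (permVal_range π h1 h2).2) (by intro j hj hj1; omega)
  simpa using this

end SS3Aux
namespace SS3Aux

open Equiv Finset

variable {n : ℕ}

/-! ### extension and insertion -/

/-- extension of a permutation of `Fin n` to `Fin (n+1)` fixing the last element. -/
def extPerm (σ : Equiv.Perm (Fin n)) : Equiv.Perm (Fin (n + 1)) :=
  (finSuccEquivLast.symm).permCongr σ.optionCongr

@[simp] lemma extPerm_castSucc (σ : Equiv.Perm (Fin n)) (x : Fin n) :
    extPerm σ x.castSucc = (σ x).castSucc := by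
  simp [extPerm, Equiv.permCongr_apply]

@[simp] lemma extPerm_last (σ : Equiv.Perm (Fin n)) :
    extPerm σ (Fin.last n) = Fin.last n := by
  simp [extPerm, Equiv.permCongr_apply]

lemma extPerm_inv (σ : Equiv.Perm (Fin n)) : (extPerm σ)⁻¹ = extPerm σ⁻¹ := by
  apply Equiv.ext
  intro x
  apply (extPerm σ).injective
  rw [Equiv.Perm.apply_inv_self]
  induction x using Fin.lastCases with
  | last => simp
  | cast y => simp

lemma extPerm_injective : Function.Injective (extPerm (n := n)) := by
  intro σ τ h
  apply Equiv.ext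
  intro x
  have := congrArg (fun f : Equiv.Perm (Fin (n+1)) => f x.castSucc) h
  simpa [Fin.castSucc_inj] using this

/-- insertion of the letter `n+1` into the cycle form of `σ`, right after position `p`
(or as a fixed point if `p = last n`). -/
def Ins (σ : Equiv.Perm (Fin n)) (p : Fin (n + 1)) : Equiv.Perm (Fin (n + 1)) :=
  extPerm σ * Equiv.swap p (Fin.last n)

lemma Ins_last (σ : Equiv.Perm (Fin n)) : Ins σ (Fin.last n) = extPerm σ := by
  rw [Ins, Equiv.swap_self]
  ext x
  simp [Equiv.Perm.mul_apply]

lemma Ins_inv (σ : Equiv.Perm (Fin n)) (p : Fin (n + 1)) :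
    (Ins σ p)⁻¹ = Ins σ⁻¹ (extPerm σ p) := by
  have h1 : extPerm σ⁻¹ (extPerm σ p) = p := by
    rw [← extPerm_inv, Equiv.Perm.inv_apply_self]
  have h2 : extPerm σ⁻¹ (Fin.last n) = Fin.last n := extPerm_last _
  rw [Ins, mul_inv_rev, extPerm_inv, Equiv.swap_inv, Ins,
    Equiv.mul_swap_eq_swap_mul, h1, h2]

lemma Ins_injective :
    Function.Injective (fun z : Equiv.Perm (Fin n) × Fin (n + 1) => Ins z.1 z.2) := by
  rintro ⟨σ, p⟩ ⟨τ, q⟩ h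
  simp only at h
  have hp : p = q := by
    have h1 := congrArg (fun f : Equiv.Perm (Fin (n+1)) => f⁻¹ (Fin.last n)) h
    simp only [Ins, mul_inv_rev] at h1
    simpa [Equiv.Perm.mul_apply, extPerm_inv] using h1
  subst hp
  simp only [Ins] at h
  have := extPerm_injective (mul_right_cancel h)
  simp [this]

lemma Ins_apply_castSucc (σ : Equiv.Perm (Fin n)) (x y : Fin n) :
    Ins σ x.castSucc y.castSucc = if y = x then Fin.last n else (σ y).castSucc := by
  rw [Ins, Equiv.Perm.mul_apply]
  by_cases h : y = x
  · subst h
    rw [Equiv.swap_apply_left, extPerm_last, if_pos rfl]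
  · rw [Equiv.swap_apply_of_ne_of_ne (by simpa [Fin.castSucc_inj] using h)
      (Fin.castSucc_lt_last y).ne, extPerm_castSucc, if_neg h]

lemma Ins_apply_last (σ : Equiv.Perm (Fin n)) (x : Fin n) :
    Ins σ x.castSucc (Fin.last n) = (σ x).castSucc := by
  rw [Ins, Equiv.Perm.mul_apply, Equiv.swap_apply_right, extPerm_castSucc]

/-! ### 1-based values of insertions -/

lemma val_Ins_castSucc (σ : Equiv.Perm (Fin n)) (x y : Fin n) :
    permVal (Ins σ x.castSucc) ((y : ℕ) + 1) =
      if y = x then n + 1 else (σ y : ℕ) + 1 := by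
  have h := permVal_coe (Ins σ x.castSucc) y.castSucc
  rw [Fin.coe_castSucc] at h
  rw [h, Ins_apply_castSucc]
  by_cases hyx : y = x <;> simp [hyx]

lemma val_Ins_castSucc_top (σ : Equiv.Perm (Fin n)) (x : Fin n) :
    permVal (Ins σ x.castSucc) (n + 1) = (σ x : ℕ) + 1 := by
  have h := permVal_coe (Ins σ x.castSucc) (Fin.last n)
  rw [Fin.val_last] at h
  rw [h, Ins_apply_last]
  simp

lemma val_Ins_last (σ : Equiv.Perm (Fin n)) (y : Fin n) :
    permVal (Ins σ (Fin.last n)) ((y : ℕ) + 1) = (σ y : ℕ) + 1 := by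
  have h := permVal_coe (Ins σ (Fin.last n)) y.castSucc
  rw [Fin.coe_castSucc] at h
  rw [h, Ins_last, extPerm_castSucc]
  simp

lemma val_Ins_last_top (σ : Equiv.Perm (Fin n)) :
    permVal (Ins σ (Fin.last n)) (n + 1) = n + 1 := by
  have h := permVal_coe (Ins σ (Fin.last n)) (Fin.last n)
  rw [Fin.val_last] at h
  rw [h, Ins_last, extPerm_last]
  simp

end SS3Aux
namespace SS3Aux

open Equiv Finset

variable {n : ℕ}

/-! ### one-step value relations -/

lemma F_eq_of_ne (σ : Equiv.Perm (Fin n)) (p : Fin (n + 1)) {v : ℕ}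
    (h1 : 1 ≤ v) (h2 : v ≤ n) (hne : v ≠ (p : ℕ) + 1) :
    permVal (Ins σ p) v = permVal σ v := by
  set x : Fin n := ⟨v - 1, by omega⟩ with hx
  have hv : v = (x : ℕ) + 1 := by simp [hx]; omega
  rw [hv, permVal_coe σ x]
  induction p using Fin.lastCases with
  | last => rw [val_Ins_last]
  | cast t =>
    rw [val_Ins_castSucc, if_neg]
    intro hxt
    apply hne
    rw [hv, hxt]
    simp

lemma core (σ : Equiv.Perm (Fin n)) (p : Fin (n + 1)) {T : ℕ} (hT : T ≤ n) :
    ∀ m' v : ℕ, 1 ≤ v → v ≤ n → 0 < m' →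
      (∀ j, 0 < j → j < m' → T < (permVal σ)^[j] v) →
      (permVal σ)^[m'] v ≤ T →
      ∃ L, 0 < L ∧ (∀ j, 0 < j → j < L → T < (permVal (Ins σ p))^[j] v) ∧
        (permVal (Ins σ p))^[L] v = (permVal σ)^[m'] v := by
  have hstep : ∀ w : ℕ, 1 ≤ w → w ≤ n →
      ∃ d, 0 < d ∧ (∀ j, 0 < j → j < d → T < (permVal (Ins σ p))^[j] w) ∧
        (permVal (Ins σ p))^[d] w = permVal σ w := by
    intro w hw1 hw2
    by_cases hwp : w = (p : ℕ) + 1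
    · have hpn : (p : ℕ) < n := by omega
      set t : Fin n := ⟨(p : ℕ), hpn⟩ with ht
      have hpt : p = t.castSucc := Fin.ext (by simp [ht])
      have hw : w = (t : ℕ) + 1 := by simp [ht]; omega
      have hF1 : permVal (Ins σ p) w = n + 1 := by
        rw [hw, hpt, val_Ins_castSucc, if_pos rfl]
      have hF2 : permVal (Ins σ p) (n + 1) = permVal σ w := by
        rw [hpt, val_Ins_castSucc_top, hw, permVal_coe]
      refine ⟨2, by omega, ?_, ?_⟩
      · intro j hj0 hj2
        have hj : j = 1 := by omega
        subst hj
        rw [Function.iterate_one, hF1]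
        omega
      · rw [show (2 : ℕ) = 1 + 1 from rfl, Function.iterate_add_apply,
          Function.iterate_one, hF1, hF2]
    · refine ⟨1, one_pos, by intro j hj0 hj1; omega, ?_⟩
      rw [Function.iterate_one, F_eq_of_ne σ p hw1 hw2 hwp]
  intro m'
  induction m' with
  | zero => intro v _ _ h _ _; exact absurd h (lt_irrefl 0)
  | succ m' ih =>
    intro v hv1 hv2 _ hmin hle
    rcases Nat.eq_zero_or_pos m' with rfl | hm'
    · obtain ⟨d, hd0, hdmin, hdval⟩ := hstep v hv1 hv2
      refine ⟨d, hd0, hdmin, ?_⟩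
      rw [hdval, Function.iterate_one]
    · have hGv := permVal_range σ hv1 hv2
      have hgt1 : T < permVal σ v := by
        have := hmin 1 one_pos (by omega)
        rwa [Function.iterate_one] at this
      obtain ⟨L₂, hL₂0, hL₂min, hL₂val⟩ := ih (permVal σ v) hGv.1 hGv.2 hm'
        (fun j hj0 hjm => by
          have := hmin (j + 1) (by omega) (by omega)
          rwa [Function.iterate_succ_apply] at this)
        (by rw [← Function.iterate_succ_apply]; exact hle)
      obtain ⟨d, hd0, hdmin, hdval⟩ := hstep v hv1 hv2
      refine ⟨L₂ + d, by omega, ?_, ?_⟩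
      · intro j hj0 hjL
        rcases Nat.lt_or_ge j d with hj | hj
        · exact hdmin j hj0 hj
        · have hsplit : (permVal (Ins σ p))^[j] v
              = (permVal (Ins σ p))^[j - d] ((permVal (Ins σ p))^[d] v) := by
            rw [← Function.iterate_add_apply]
            congr 1
            omega
          rw [hsplit, hdval]
          rcases Nat.eq_zero_or_pos (j - d) with h0 | hpos
          · rw [h0, Function.iterate_zero, id_eq]; exact hgt1
          · exact hL₂min (j - d) hpos (by omega)
      · rw [Function.iterate_add_apply, hdval, hL₂val, ← Function.iterate_succ_apply]

lemma removeVal_Ins (σ : Equiv.Perm (Fin n)) (p : Fin (n + 1)) {k v : ℕ} (hk : 0 < k)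
    (hv1 : 1 ≤ v) (hv2 : v ≤ n + 1 - k) :
    removeVal (Ins σ p) k v = removeVal σ (k - 1) v := by
  have hTn : n + 1 - k ≤ n := by omega
  have hvn : v ≤ n := by omega
  have hex : ∃ m', 0 < m' ∧ (permVal σ)^[m'] v ≤ n + 1 - k := by
    obtain ⟨r, hr0, hrn, hrv⟩ := exists_return σ hv1 hvn
    exact ⟨r, hr0, by rw [hrv]; exact hv2⟩
  obtain ⟨hM0, hMle⟩ := Nat.find_spec hex
  have hMmin : ∀ j, 0 < j → j < Nat.find hex → n + 1 - k < (permVal σ)^[j] v := by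
    intro j hj0 hjM
    have hnm := Nat.find_min hex hjM
    push_neg at hnm
    exact hnm hj0
  obtain ⟨L, hL0, hLmin, hLval⟩ := core σ p hTn (Nat.find hex) v hv1 hvn hM0 hMmin hMle
  have h1 := removeVal_eq_of_least (Ins σ p) k hv1 (v := v) (by omega) hL0
    (by rw [hLval]; exact hMle) hLmin
  have heq : n - (k - 1) = n + 1 - k := by omega
  have h2 := removeVal_eq_of_least σ (k - 1) hv1 (v := v) (by omega) hM0
    (by rw [heq]; exact hMle) (by intro j hj0 hjM; rw [heq]; exact hMmin j hj0 hjM)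
  rw [h1, h2, hLval]

lemma simsun2_Ins_iff (σ : Equiv.Perm (Fin n)) (p : Fin (n + 1)) :
    Simsun2 (Ins σ p) ↔ CdaFree (Ins σ p) ∧ Simsun2 σ := by
  constructor
  · intro h
    constructor
    · intro v hv
      rw [Finset.mem_Icc] at hv
      have := h 0 (by omega) v (by rw [Finset.mem_Icc]; omega)
      rwa [removeVal_zero _ hv.1 hv.2, removeVal_zero _ hv.1 hv.2] at this
    · intro k hk v hv
      rw [Finset.mem_Icc] at hv
      have hv2 : v ≤ n + 1 - (k + 1) := by omega
      have := h (k + 1) (by omega) v (by rw [Finset.mem_Icc]; omega)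
      rw [Ins_inv, removeVal_Ins σ p (by omega) hv.1 hv2,
        removeVal_Ins σ⁻¹ (extPerm σ p) (by omega) hv.1 hv2,
        Nat.add_sub_cancel] at this
      exact this
  · rintro ⟨hcda, hs⟩
    intro k hk v hv
    rw [Finset.mem_Icc] at hv
    match k with
    | 0 =>
      have hv2 : v ≤ n + 1 := by omega
      rw [removeVal_zero _ hv.1 hv2, removeVal_zero _ hv.1 hv2]
      exact hcda v (by rw [Finset.mem_Icc]; omega)
    | k + 1 =>
      have hv2 : v ≤ n + 1 - (k + 1) := by omega
      rw [Ins_inv, removeVal_Ins σ p (by omega) hv.1 hv2,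
        removeVal_Ins σ⁻¹ (extPerm σ p) (by omega) hv.1 hv2,
        Nat.add_sub_cancel]
      exact hs k (by omega) v (by rw [Finset.mem_Icc]; omega)

/-! ### cycle-double-ascent freeness at the `Fin` level -/

lemma cdaFree_iff_fin {m : ℕ} (π : Equiv.Perm (Fin m)) :
    CdaFree π ↔ ∀ x : Fin m, ¬ ((π⁻¹ x : ℕ) < (x : ℕ) ∧ (x : ℕ) < (π x : ℕ)) := by
  constructor
  · intro h x
    have hm := h ((x : ℕ) + 1) (by rw [Finset.mem_Icc]; exact ⟨by omega, x.isLt⟩)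
    rw [permVal_coe, permVal_coe] at hm
    intro ⟨a, b⟩
    exact hm ⟨by omega, by omega⟩
  · intro h v hv
    rw [Finset.mem_Icc] at hv
    set x : Fin m := ⟨v - 1, by omega⟩ with hx
    have hvx : v = (x : ℕ) + 1 := by simp [hx]; omega
    rw [hvx, permVal_coe, permVal_coe]
    intro ⟨a, b⟩
    exact h x ⟨by omega, by omega⟩

lemma cdaFree_Ins_last (σ : Equiv.Perm (Fin n))
    (hσ : ∀ x : Fin n, ¬ ((σ⁻¹ x : ℕ) < (x : ℕ) ∧ (x : ℕ) < (σ x : ℕ))) :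
    CdaFree (Ins σ (Fin.last n)) := by
  rw [cdaFree_iff_fin]
  intro w
  rw [Ins_last, extPerm_inv]
  induction w using Fin.lastCases with
  | last =>
    rw [extPerm_last, extPerm_last]
    intro ⟨a, b⟩
    omega
  | cast y =>
    rw [extPerm_castSucc, extPerm_castSucc]
    have := hσ y
    simpa using this

lemma cdaFree_Ins_castSucc_iff (σ : Equiv.Perm (Fin n))
    (hσ : ∀ x : Fin n, ¬ ((σ⁻¹ x : ℕ) < (x : ℕ) ∧ (x : ℕ) < (σ x : ℕ))) (x : Fin n) :
    CdaFree (Ins σ x.castSucc) ↔ (x : ℕ) ≤ (σ⁻¹ x : ℕ) := by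
  have hinv : (Ins σ x.castSucc)⁻¹ = Ins σ⁻¹ (σ x).castSucc := by
    rw [Ins_inv, extPerm_castSucc]
  rw [cdaFree_iff_fin]
  constructor
  · intro h
    by_contra hc
    push_neg at hc
    apply h x.castSucc
    have hfix : ¬ (x = σ x) := by
      intro hxx
      have hxi : σ⁻¹ x = x := by
        rw [hxx, Equiv.Perm.inv_apply_self]
        exact hxx
      rw [hxi] at hc
      exact absurd hc (lt_irrefl _)
    constructor
    · rw [hinv, Ins_apply_castSucc, if_neg hfix]
      simpa using hc
    · rw [Ins_apply_castSucc, if_pos rfl]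
      simp [Fin.val_last]
  · intro hx w
    induction w using Fin.lastCases with
    | last =>
      rw [Ins_apply_last]
      intro ⟨a, b⟩
      simp at b
      omega
    | cast y =>
      rw [hinv, Ins_apply_castSucc, Ins_apply_castSucc]
      by_cases hyx : y = x
      · subst hyx
        rw [if_pos rfl]
        by_cases hyy : y = σ y
        · rw [if_pos hyy]
          intro ⟨a, b⟩
          simp at a
          omega
        · rw [if_neg hyy]
          intro ⟨a, b⟩
          simp at a
          rw [Equiv.Perm.inv_def] at hx
          omega
      · rw [if_neg hyx]
        by_cases hys : y = σ x
        · rw [if_pos hys]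
          intro ⟨a, b⟩
          simp at a
          omega
        · rw [if_neg hys]
          intro ⟨a, b⟩
          simp at a b
          exact hσ y ⟨a, b⟩

end SS3Aux
namespace SS3Aux

open Equiv Finset

variable {n : ℕ}

/-! ### counting helpers -/

lemma card_filter' {α : Type*} (s : Finset α) (p : α → Prop) [DecidablePred p] :
    (s.filter p).card = ∑ a ∈ s, if p a then 1 else 0 := by
  rw [Finset.sum_ite, Finset.sum_const_zero, add_zero, Finset.sum_const, smul_eq_mul, mul_one]

lemma card_reindex {m : ℕ} (Q : ℕ → Prop) [DecidablePred Q] :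
    ((Finset.Icc 1 m).filter Q).card
      = (Finset.univ.filter fun x : Fin m => Q ((x : ℕ) + 1)).card := by
  apply Finset.card_bij
    (fun v hv => (⟨v - 1, by rw [Finset.mem_filter, Finset.mem_Icc] at hv; omega⟩ : Fin m))
  · intro a ha
    rw [Finset.mem_filter, Finset.mem_Icc] at ha
    rw [Finset.mem_filter]
    refine ⟨Finset.mem_univ _, ?_⟩
    simp only
    rw [show a - 1 + 1 = a by omega]
    exact ha.2
  · intro a ha b hb hab
    rw [Finset.mem_filter, Finset.mem_Icc] at ha hb
    rw [Fin.mk.injEq] at hab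
    omega
  · intro b hb
    rw [Finset.mem_filter] at hb
    refine ⟨(b : ℕ) + 1, ?_, ?_⟩
    · rw [Finset.mem_filter, Finset.mem_Icc]
      exact ⟨⟨by omega, b.isLt⟩, hb.2⟩
    · exact Fin.ext (by simp)

lemma fixNum_fin {m : ℕ} (π : Equiv.Perm (Fin m)) :
    fixNum π = (Finset.univ.filter fun x : Fin m => π x = x).card := by
  rw [fixNum, card_reindex]
  congr 1
  apply Finset.filter_congr
  intro x _
  rw [permVal_coe, Fin.ext_iff]
  omega

lemma excNum_fin {m : ℕ} (π : Equiv.Perm (Fin m)) :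
    excNum π = (Finset.univ.filter fun x : Fin m => (x : ℕ) < (π x : ℕ)).card := by
  rw [excNum, card_reindex]
  congr 1
  apply Finset.filter_congr
  intro x _
  rw [permVal_coe]
  omega

lemma card_filter_fin_succ (P : Fin (n + 1) → Prop) [DecidablePred P] :
    (Finset.univ.filter P).card
      = (Finset.univ.filter fun y : Fin n => P y.castSucc).card
        + (if P (Fin.last n) then 1 else 0) := by
  rw [card_filter', card_filter', Fin.sum_univ_castSucc]

/-! ### statistics of insertions -/

lemma fixNum_Ins_last (σ : Equiv.Perm (Fin n)) :
    fixNum (Ins σ (Fin.last n)) = fixNum σ + 1 := by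
  rw [fixNum_fin, fixNum_fin, card_filter_fin_succ]
  congr 2
  · apply Finset.filter_congr
    intro y _
    rw [Ins_last, extPerm_castSucc, Fin.castSucc_inj]
  · rw [if_pos]
    rw [Ins_last, extPerm_last]

lemma excNum_Ins_last (σ : Equiv.Perm (Fin n)) :
    excNum (Ins σ (Fin.last n)) = excNum σ := by
  rw [excNum_fin, excNum_fin, card_filter_fin_succ]
  rw [if_neg (by rw [Ins_last, extPerm_last]; exact lt_irrefl _), add_zero]
  congr 1
  apply Finset.filter_congr
  intro y _
  rw [Ins_last, extPerm_castSucc, Fin.coe_castSucc, Fin.coe_castSucc]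

lemma fixNum_Ins_castSucc (σ : Equiv.Perm (Fin n)) (x : Fin n) :
    fixNum σ = fixNum (Ins σ x.castSucc) + (if σ x = x then 1 else 0) := by
  rw [fixNum_fin, fixNum_fin, card_filter_fin_succ]
  have hlast : ¬ (Ins σ x.castSucc (Fin.last n) = Fin.last n) := by
    rw [Ins_apply_last]
    exact (Fin.castSucc_lt_last (σ x)).ne
  rw [if_neg hlast, add_zero]
  have hfil : (Finset.univ.filter fun y : Fin n => Ins σ x.castSucc y.castSucc = y.castSucc)
      = (Finset.univ.filter fun y : Fin n => σ y = y).erase x := by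
    ext y
    rw [Finset.mem_erase, Finset.mem_filter, Finset.mem_filter, Ins_apply_castSucc]
    by_cases hyx : y = x
    · subst hyx
      rw [if_pos rfl]
      have h1 : Fin.last n ≠ y.castSucc := (Fin.castSucc_lt_last y).ne'
      simp [h1]
    · rw [if_neg hyx]
      simp [hyx, Fin.castSucc_inj]
  rw [hfil]
  by_cases hx : σ x = x
  · rw [if_pos hx, Finset.card_erase_of_mem (by simp [hx])]
    have hpos : 0 < (Finset.univ.filter fun y : Fin n => σ y = y).card :=
      Finset.card_pos.2 ⟨x, by simp [hx]⟩
    omega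
  · rw [if_neg hx, add_zero, Finset.erase_eq_of_notMem (by simp [hx])]

lemma excNum_Ins_castSucc (σ : Equiv.Perm (Fin n)) (x : Fin n) :
    excNum (Ins σ x.castSucc) + (if (x : ℕ) < (σ x : ℕ) then 1 else 0) = excNum σ + 1 := by
  rw [excNum_fin, excNum_fin, card_filter_fin_succ]
  have hlast : ¬ ((Fin.last n : ℕ) < (Ins σ x.castSucc (Fin.last n) : ℕ)) := by
    rw [Ins_apply_last, Fin.val_last, Fin.coe_castSucc]
    exact not_lt.2 (le_of_lt (σ x).isLt)
  rw [if_neg hlast, add_zero]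
  have hfil : (Finset.univ.filter fun y : Fin n =>
        ((y.castSucc : Fin (n+1)) : ℕ) < ((Ins σ x.castSucc y.castSucc : Fin (n+1)) : ℕ))
      = insert x ((Finset.univ.filter fun y : Fin n => (y : ℕ) < (σ y : ℕ)).erase x) := by
    ext y
    rw [Finset.mem_insert, Finset.mem_erase, Finset.mem_filter, Finset.mem_filter,
      Ins_apply_castSucc]
    by_cases hyx : y = x
    · subst hyx
      rw [if_pos rfl]
      simp [Fin.val_last]
    · rw [if_neg hyx]
      simp [hyx, Fin.coe_castSucc]
  rw [hfil, Finset.card_insert_of_notMem (fun hmem => (Finset.mem_erase.1 hmem).1 rfl)]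
  by_cases hx : (x : ℕ) < (σ x : ℕ)
  · rw [if_pos hx, Finset.card_erase_of_mem
      (by rw [Finset.mem_filter]; exact ⟨Finset.mem_univ _, hx⟩)]
    have hpos : 0 < (Finset.univ.filter fun y : Fin n => (y : ℕ) < (σ y : ℕ)).card :=
      Finset.card_pos.2 ⟨x, by rw [Finset.mem_filter]; exact ⟨Finset.mem_univ _, hx⟩⟩
    omega
  · rw [if_neg hx]
    have he : (Finset.univ.filter fun y : Fin n => (y : ℕ) < (σ y : ℕ)).erase x
        = Finset.univ.filter fun y : Fin n => (y : ℕ) < (σ y : ℕ) :=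
      Finset.erase_eq_of_notMem (fun h => hx (Finset.mem_filter.1 h).2)
    rw [he]

/-! ### the partition of positions -/

lemma card_excval (σ : Equiv.Perm (Fin n)) :
    (Finset.univ.filter fun x : Fin n => (σ⁻¹ x : ℕ) < (x : ℕ)).card
      = (Finset.univ.filter fun x : Fin n => (x : ℕ) < (σ x : ℕ)).card := by
  apply Finset.card_bij (fun x _ => σ⁻¹ x)
  · intro a ha
    rw [Finset.mem_filter] at ha ⊢
    refine ⟨Finset.mem_univ _, ?_⟩
    rw [Equiv.Perm.apply_inv_self]
    exact ha.2
  · intro a _ b _ hab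
    exact σ⁻¹.injective hab
  · intro b hb
    rw [Finset.mem_filter] at hb
    refine ⟨σ b, ?_, ?_⟩
    · rw [Finset.mem_filter, Equiv.Perm.inv_apply_self]
      exact ⟨Finset.mem_univ _, hb.2⟩
    · rw [Equiv.Perm.inv_apply_self]

lemma card_c3 (σ : Equiv.Perm (Fin n))
    (hσ : ∀ x : Fin n, ¬ ((σ⁻¹ x : ℕ) < (x : ℕ) ∧ (x : ℕ) < (σ x : ℕ))) :
    ((Finset.univ.filter fun x : Fin n =>
        (σ x : ℕ) < (x : ℕ) ∧ (x : ℕ) < (σ⁻¹ x : ℕ)).card : ℤ)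
      = (n : ℤ) - fixNum σ - 2 * excNum σ := by
  have key : (Finset.univ : Finset (Fin n)).card =
      (Finset.univ.filter fun x : Fin n => σ x = x).card
      + (Finset.univ.filter fun x : Fin n => (x : ℕ) < (σ x : ℕ)).card
      + (Finset.univ.filter fun x : Fin n =>
          (σ x : ℕ) < (x : ℕ) ∧ (x : ℕ) < (σ⁻¹ x : ℕ)).card
      + (Finset.univ.filter fun x : Fin n => (σ⁻¹ x : ℕ) < (x : ℕ)).card := by
    rw [card_filter', card_filter', card_filter', card_filter',
      ← Finset.sum_add_distrib, ← Finset.sum_add_distrib, ← Finset.sum_add_distrib,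
      Finset.card_eq_sum_ones]
    apply Finset.sum_congr rfl
    intro x _
    have hx := hσ x
    have hxe : σ x = x ↔ (σ x : ℕ) = (x : ℕ) := Fin.ext_iff
    have hinv : (σ⁻¹ x : ℕ) = (x : ℕ) ↔ (σ x : ℕ) = (x : ℕ) := by
      constructor
      · intro h
        have h2 : σ⁻¹ x = x := Fin.ext h
        have h3 : σ x = x := by
          conv_lhs => rw [← h2]
          rw [Equiv.Perm.apply_inv_self]
        rw [h3]
      · intro h
        have h2 : σ x = x := Fin.ext h
        have h3 : σ⁻¹ x = x := by
          apply σ.injective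
          rw [Equiv.Perm.apply_inv_self, h2]
        rw [h3]
    rcases lt_trichotomy ((σ x : ℕ)) ((x : ℕ)) with h1 | h1 | h1
    · rw [if_neg (by omega), if_neg (by omega)]
      rcases lt_trichotomy ((σ⁻¹ x : ℕ)) ((x : ℕ)) with h2 | h2 | h2
      · rw [if_neg (by omega), if_pos h2]
      · omega
      · rw [if_pos ⟨h1, h2⟩, if_neg (by omega)]
    · rw [if_pos (by omega), if_neg (by omega), if_neg (by omega), if_neg (by omega)]
    · have h2 : ¬ ((σ⁻¹ x : ℕ) < (x : ℕ)) := fun hc => hx ⟨hc, h1⟩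
      rw [if_neg (by omega), if_pos h1, if_neg (by omega), if_neg h2]
  have hc4 := card_excval σ
  have hful : (Finset.univ : Finset (Fin n)).card = n := by
    rw [Finset.card_univ, Fintype.card_fin]
  rw [fixNum_fin, excNum_fin]
  omega

end SS3Aux
namespace SS3Aux

open Equiv Finset

variable {n : ℕ}

lemma cdaFree_fin_of_simsun2 (σ : Equiv.Perm (Fin n)) (hs : Simsun2 σ) :
    ∀ x : Fin n, ¬ ((σ⁻¹ x : ℕ) < (x : ℕ) ∧ (x : ℕ) < (σ x : ℕ)) := by
  rw [← cdaFree_iff_fin]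
  intro v hv
  rw [Finset.mem_Icc] at hv
  have := hs 0 (by omega) v (by rw [Finset.mem_Icc]; omega)
  rwa [removeVal_zero _ hv.1 hv.2, removeVal_zero _ hv.1 hv.2] at this

lemma gamma_sum (m : ℕ) (a b : ℤ) :
    gammaZ m a b = ∑ σ : Equiv.Perm (Fin m),
      if Simsun2 σ ∧ (fixNum σ : ℤ) = a ∧ (excNum σ : ℤ) = b then (1 : ℤ) else 0 := by
  by_cases h : 0 ≤ a ∧ 0 ≤ b
  · rw [gammaZ, if_pos h, card_filter']
    push_cast
    apply Finset.sum_congr rfl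
    intro σ _
    have hiff : (Simsun2 σ ∧ fixNum σ = a.toNat ∧ excNum σ = b.toNat)
        ↔ (Simsun2 σ ∧ (fixNum σ : ℤ) = a ∧ (excNum σ : ℤ) = b) := by
      constructor
      · rintro ⟨h1, h2, h3⟩; exact ⟨h1, by omega, by omega⟩
      · rintro ⟨h1, h2, h3⟩; exact ⟨h1, by omega, by omega⟩
    rw [if_congr hiff rfl rfl]
  · rw [gammaZ, if_neg h]
    symm
    apply Finset.sum_eq_zero
    intro σ _
    rw [if_neg]
    rintro ⟨_, h2, h3⟩
    exact h ⟨by omega, by omega⟩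

lemma card_Ins_eq (P : Equiv.Perm (Fin (n + 1)) → Prop) [DecidablePred P] :
    ((Finset.univ : Finset (Equiv.Perm (Fin (n + 1)))).filter P).card
      = ((Finset.univ : Finset (Equiv.Perm (Fin n) × Fin (n + 1))).filter
          fun z => P (Ins z.1 z.2)).card := by
  have hbij : Function.Bijective (fun z : Equiv.Perm (Fin n) × Fin (n + 1) => Ins z.1 z.2) := by
    rw [Fintype.bijective_iff_injective_and_card]
    refine ⟨Ins_injective, ?_⟩
    rw [Fintype.card_prod, Fintype.card_perm, Fintype.card_perm, Fintype.card_fin,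
      Fintype.card_fin, Nat.factorial_succ, Nat.mul_comm]
  symm
  apply Finset.card_bij (fun z _ => Ins z.1 z.2)
  · intro a ha
    rw [Finset.mem_filter] at ha ⊢
    exact ⟨Finset.mem_univ _, ha.2⟩
  · intro a _ b _ hab
    exact Ins_injective hab
  · intro π hπ
    rw [Finset.mem_filter] at hπ
    obtain ⟨z, hz⟩ := hbij.2 π
    refine ⟨z, ?_, hz⟩
    rw [Finset.mem_filter]
    refine ⟨Finset.mem_univ _, ?_⟩
    show P (Ins z.1 z.2)
    rw [show Ins z.1 z.2 = π from hz]
    exact hπ.2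

lemma inner_sum (σ : Equiv.Perm (Fin n)) (i j : ℤ) :
    (∑ p : Fin (n + 1), if Simsun2 (Ins σ p) ∧ (fixNum (Ins σ p) : ℤ) = i
        ∧ (excNum (Ins σ p) : ℤ) = j then (1 : ℤ) else 0)
      = (if Simsun2 σ ∧ (fixNum σ : ℤ) = i - 1 ∧ (excNum σ : ℤ) = j then 1 else 0)
      + (1 + i) * (if Simsun2 σ ∧ (fixNum σ : ℤ) = i + 1 ∧ (excNum σ : ℤ) = j - 1 then 1 else 0)
      + j * (if Simsun2 σ ∧ (fixNum σ : ℤ) = i ∧ (excNum σ : ℤ) = j then 1 else 0)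
      + ((n : ℤ) - i - 2 * j + 2)
          * (if Simsun2 σ ∧ (fixNum σ : ℤ) = i ∧ (excNum σ : ℤ) = j - 1 then 1 else 0) := by
  by_cases hs : Simsun2 σ
  case neg =>
    have hz : ∀ p : Fin (n + 1), ¬ (Simsun2 (Ins σ p) ∧ (fixNum (Ins σ p) : ℤ) = i
        ∧ (excNum (Ins σ p) : ℤ) = j) := by
      rintro p ⟨h1, _⟩
      exact hs ((simsun2_Ins_iff σ p).1 h1).2
    rw [Finset.sum_eq_zero (fun p _ => if_neg (hz p))]
    rw [if_neg (fun h => hs h.1), if_neg (fun h => hs h.1), if_neg (fun h => hs h.1),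
      if_neg (fun h => hs h.1)]
    ring
  case pos =>
    have hσ := cdaFree_fin_of_simsun2 σ hs
    rw [Fin.sum_univ_castSucc]
    -- the last term
    have hlast : (if Simsun2 (Ins σ (Fin.last n)) ∧ (fixNum (Ins σ (Fin.last n)) : ℤ) = i
          ∧ (excNum (Ins σ (Fin.last n)) : ℤ) = j then (1 : ℤ) else 0)
        = (if Simsun2 σ ∧ (fixNum σ : ℤ) = i - 1 ∧ (excNum σ : ℤ) = j then 1 else 0) := by
      apply if_congr _ rfl rfl
      rw [simsun2_Ins_iff, fixNum_Ins_last, excNum_Ins_last]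
      constructor
      · rintro ⟨_, h2, h3⟩
        exact ⟨hs, by push_cast at h2 ⊢; omega, h3⟩
      · rintro ⟨_, h2, h3⟩
        exact ⟨⟨cdaFree_Ins_last σ hσ, hs⟩, by push_cast; omega, h3⟩
    -- the pointwise terms
    have hterm : ∀ x : Fin n,
        (if Simsun2 (Ins σ x.castSucc) ∧ (fixNum (Ins σ x.castSucc) : ℤ) = i
            ∧ (excNum (Ins σ x.castSucc) : ℤ) = j then (1 : ℤ) else 0)
        = (if Simsun2 σ ∧ (fixNum σ : ℤ) = i + 1 ∧ (excNum σ : ℤ) = j - 1 then 1 else 0)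
            * (if σ x = x then 1 else 0)
        + (if Simsun2 σ ∧ (fixNum σ : ℤ) = i ∧ (excNum σ : ℤ) = j then 1 else 0)
            * (if (x : ℕ) < (σ x : ℕ) then 1 else 0)
        + (if Simsun2 σ ∧ (fixNum σ : ℤ) = i ∧ (excNum σ : ℤ) = j - 1 then 1 else 0)
            * (if (σ x : ℕ) < (x : ℕ) ∧ (x : ℕ) < (σ⁻¹ x : ℕ) then 1 else 0) := by
      intro x
      have hfix := fixNum_Ins_castSucc σ x
      have hexc := excNum_Ins_castSucc σ x
      have hsim : Simsun2 (Ins σ x.castSucc) ↔ (x : ℕ) ≤ (σ⁻¹ x : ℕ) := by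
        rw [simsun2_Ins_iff, cdaFree_Ins_castSucc_iff σ hσ x]
        exact ⟨fun h => h.1, fun h => ⟨h, hs⟩⟩
      rcases lt_trichotomy ((σ x : ℕ)) ((x : ℕ)) with h1 | h1 | h1
      · -- σ x < x
        have hxx : ¬ (σ x = x) := fun hc => by rw [hc] at h1; omega
        rw [if_neg hxx, mul_zero,
          if_neg (show ¬ ((x : ℕ) < (σ x : ℕ)) by omega), mul_zero, zero_add, zero_add]
        rcases lt_trichotomy ((σ⁻¹ x : ℕ)) ((x : ℕ)) with h2 | h2 | h2
        · -- invalid insertion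
          rw [if_neg (show ¬ ((σ x : ℕ) < (x : ℕ) ∧ (x : ℕ) < (σ⁻¹ x : ℕ)) by omega),
            mul_zero, if_neg]
          rintro ⟨hsim', _⟩
          rw [hsim] at hsim'
          omega
        · exfalso
          have h2' : σ⁻¹ x = x := Fin.ext h2
          have hcc : σ x = x := by
            conv_lhs => rw [← h2']
            rw [Equiv.Perm.apply_inv_self]
          exact hxx hcc
        · -- valid, becomes an excedance
          rw [if_pos (show ((σ x : ℕ) < (x : ℕ) ∧ (x : ℕ) < (σ⁻¹ x : ℕ)) from ⟨h1, h2⟩),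
            mul_one]
          apply if_congr _ rfl rfl
          rw [hsim]
          have hf : fixNum σ = fixNum (Ins σ x.castSucc) := by
            rw [hfix, if_neg hxx, add_zero]
          have he : excNum (Ins σ x.castSucc) = excNum σ + 1 := by
            rw [if_neg (show ¬ ((x : ℕ) < (σ x : ℕ)) by omega), add_zero] at hexc
            omega
          constructor
          · rintro ⟨_, hh2, hh3⟩
            exact ⟨hs, by omega, by omega⟩
          · rintro ⟨_, hh2, hh3⟩
            exact ⟨by omega, by omega, by omega⟩
      · -- σ x = x
        have hxx : σ x = x := Fin.ext h1
        have hix : σ⁻¹ x = x := by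
          apply σ.injective
          rw [Equiv.Perm.apply_inv_self, hxx]
        have hix' : (σ⁻¹ x : ℕ) = (x : ℕ) := by rw [hix]
        rw [if_pos hxx, mul_one,
          if_neg (show ¬ ((x : ℕ) < (σ x : ℕ)) by omega), mul_zero,
          if_neg (show ¬ ((σ x : ℕ) < (x : ℕ) ∧ (x : ℕ) < (σ⁻¹ x : ℕ)) by omega), mul_zero,
          add_zero, add_zero]
        apply if_congr _ rfl rfl
        rw [hsim]
        have hf : fixNum σ = fixNum (Ins σ x.castSucc) + 1 := by
          rw [hfix, if_pos hxx]
        have he : excNum (Ins σ x.castSucc) = excNum σ + 1 := by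
          rw [if_neg (show ¬ ((x : ℕ) < (σ x : ℕ)) by omega), add_zero] at hexc
          omega
        constructor
        · rintro ⟨_, hh2, hh3⟩
          exact ⟨hs, by omega, by omega⟩
        · rintro ⟨_, hh2, hh3⟩
          exact ⟨by omega, by omega, by omega⟩
      · -- x < σ x
        have hxx : ¬ (σ x = x) := fun hc => by rw [hc] at h1; omega
        have hvalid : (x : ℕ) ≤ (σ⁻¹ x : ℕ) := by
          have := hσ x
          omega
        rw [if_neg hxx, mul_zero, if_pos h1, mul_one,
          if_neg (show ¬ ((σ x : ℕ) < (x : ℕ) ∧ (x : ℕ) < (σ⁻¹ x : ℕ)) by omega), mul_zero,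
          zero_add, add_zero]
        apply if_congr _ rfl rfl
        rw [hsim]
        have hf : fixNum σ = fixNum (Ins σ x.castSucc) := by
          rw [hfix, if_neg hxx, add_zero]
        have he : excNum (Ins σ x.castSucc) = excNum σ := by
          rw [if_pos h1] at hexc
          omega
        constructor
        · rintro ⟨_, hh2, hh3⟩
          exact ⟨hs, by omega, by omega⟩
        · rintro ⟨_, hh2, hh3⟩
          exact ⟨by omega, by omega, by omega⟩
    rw [Finset.sum_congr rfl (fun x _ => hterm x), hlast]
    rw [Finset.sum_add_distrib, Finset.sum_add_distrib,
      ← Finset.mul_sum, ← Finset.mul_sum, ← Finset.mul_sum]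
    have s1 : (∑ x : Fin n, if σ x = x then (1 : ℤ) else 0) = (fixNum σ : ℤ) := by
      rw [Finset.sum_boole, fixNum_fin]
    have s2 : (∑ x : Fin n, if (x : ℕ) < (σ x : ℕ) then (1 : ℤ) else 0) = (excNum σ : ℤ) := by
      rw [Finset.sum_boole, excNum_fin]
    have s3 : (∑ x : Fin n, if (σ x : ℕ) < (x : ℕ) ∧ (x : ℕ) < (σ⁻¹ x : ℕ) then (1 : ℤ) else 0)
        = (n : ℤ) - fixNum σ - 2 * excNum σ := by
      rw [Finset.sum_boole]
      exact card_c3 σ hσ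
    rw [s1, s2, s3]
    have e2 : (if Simsun2 σ ∧ (fixNum σ : ℤ) = i + 1 ∧ (excNum σ : ℤ) = j - 1 then (1 : ℤ) else 0)
          * (fixNum σ : ℤ)
        = (1 + i) * (if Simsun2 σ ∧ (fixNum σ : ℤ) = i + 1 ∧ (excNum σ : ℤ) = j - 1
            then 1 else 0) := by
      by_cases h : Simsun2 σ ∧ (fixNum σ : ℤ) = i + 1 ∧ (excNum σ : ℤ) = j - 1
      · rw [if_pos h, one_mul, mul_one]
        omega
      · rw [if_neg h, zero_mul, mul_zero]
    have e3 : (if Simsun2 σ ∧ (fixNum σ : ℤ) = i ∧ (excNum σ : ℤ) = j then (1 : ℤ) else 0)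
          * (excNum σ : ℤ)
        = j * (if Simsun2 σ ∧ (fixNum σ : ℤ) = i ∧ (excNum σ : ℤ) = j then 1 else 0) := by
      by_cases h : Simsun2 σ ∧ (fixNum σ : ℤ) = i ∧ (excNum σ : ℤ) = j
      · rw [if_pos h, one_mul, mul_one]
        omega
      · rw [if_neg h, zero_mul, mul_zero]
    have e4 : (if Simsun2 σ ∧ (fixNum σ : ℤ) = i ∧ (excNum σ : ℤ) = j - 1 then (1 : ℤ) else 0)
          * ((n : ℤ) - fixNum σ - 2 * excNum σ)
        = ((n : ℤ) - i - 2 * j + 2) * (if Simsun2 σ ∧ (fixNum σ : ℤ) = i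
            ∧ (excNum σ : ℤ) = j - 1 then 1 else 0) := by
      by_cases h : Simsun2 σ ∧ (fixNum σ : ℤ) = i ∧ (excNum σ : ℤ) = j - 1
      · rw [if_pos h, one_mul, mul_one]
        omega
      · rw [if_neg h, zero_mul, mul_zero]
    rw [e2, e3, e4]
    ring

lemma main_rec (n : ℕ) (i j : ℤ) :
    gammaZ (n + 1) i j = gammaZ n (i - 1) j + (1 + i) * gammaZ n (i + 1) (j - 1)
      + j * gammaZ n i j + ((n : ℤ) - i - 2 * j + 2) * gammaZ n i (j - 1) := by
  have hL : gammaZ (n + 1) i j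
      = ∑ z : Equiv.Perm (Fin n) × Fin (n + 1),
          if Simsun2 (Ins z.1 z.2) ∧ (fixNum (Ins z.1 z.2) : ℤ) = i
            ∧ (excNum (Ins z.1 z.2) : ℤ) = j then (1 : ℤ) else 0 := by
    rw [gamma_sum, Finset.sum_boole, card_Ins_eq, ← Finset.sum_boole]
  rw [hL, Fintype.sum_prod_type]
  rw [Finset.sum_congr rfl (fun σ _ => inner_sum σ i j)]
  rw [Finset.sum_add_distrib, Finset.sum_add_distrib, Finset.sum_add_distrib,
    ← Finset.mul_sum, ← Finset.mul_sum, ← Finset.mul_sum]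
  rw [gamma_sum n (i - 1) j, gamma_sum n (i + 1) (j - 1), gamma_sum n i j,
    gamma_sum n i (j - 1)]

lemma simsun2_zero (σ : Equiv.Perm (Fin 0)) : Simsun2 σ := by
  intro k hk v hv
  intro _
  rw [Finset.mem_Icc] at hv
  omega

lemma fixNum_zero (σ : Equiv.Perm (Fin 0)) : fixNum σ = 0 := by
  rw [fixNum_fin]
  simp

lemma excNum_zero (σ : Equiv.Perm (Fin 0)) : excNum σ = 0 := by
  rw [excNum_fin]
  simp

lemma gamma_zero_zero : gammaZ 0 0 0 = 1 := by
  rw [gammaZ, if_pos ⟨le_refl 0, le_refl 0⟩]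
  have hfil : ((Finset.univ : Finset (Equiv.Perm (Fin 0))).filter fun π =>
      Simsun2 π ∧ fixNum π = (0 : ℤ).toNat ∧ excNum π = (0 : ℤ).toNat) = Finset.univ := by
    apply Finset.filter_true_of_mem
    intro π _
    exact ⟨simsun2_zero π, by rw [fixNum_zero]; rfl, by rw [excNum_zero]; rfl⟩
  rw [hfil, Finset.card_univ]
  simp [Fintype.card_perm]

lemma gamma_zero_ne (i j : ℤ) (hi : 0 ≤ i) (hj : 0 ≤ j) (hne : (i, j) ≠ (0, 0)) :
    gammaZ 0 i j = 0 := by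
  rw [gammaZ, if_pos ⟨hi, hj⟩]
  have hfil : ((Finset.univ : Finset (Equiv.Perm (Fin 0))).filter fun π =>
      Simsun2 π ∧ fixNum π = i.toNat ∧ excNum π = j.toNat) = ∅ := by
    apply Finset.filter_false_of_mem
    rintro π _ ⟨_, h2, h3⟩
    rw [fixNum_zero] at h2
    rw [excNum_zero] at h3
    have hi0 : i = 0 := by omega
    have hj0 : j = 0 := by omega
    subst hi0
    subst hj0
    exact hne rfl
  rw [hfil]
  simp

end SS3Aux

theorem stmt3 :
    (∀ n : ℕ, ∀ i j : ℤ, 0 ≤ i → 0 ≤ j →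
      gammaZ (n + 1) i j =
        gammaZ n (i - 1) j + (1 + i) * gammaZ n (i + 1) (j - 1) +
          j * gammaZ n i j + ((n : ℤ) - i - 2 * j + 2) * gammaZ n i (j - 1)) ∧
    gammaZ 0 0 0 = 1 ∧
    (∀ i j : ℤ, 0 ≤ i → 0 ≤ j → (i, j) ≠ (0, 0) → gammaZ 0 i j = 0) := by
  refine ⟨fun n i j _ _ => SS3Aux.main_rec n i j, SS3Aux.gamma_zero_zero,
    fun i j hi hj hne => SS3Aux.gamma_zero_ne i j hi hj hne⟩

end
end

section
/- For every n ≥ 0, one has the identity of polynomials A_{n+1}(x,y,s) = Σ_{i=0}^{n} C(n,i) Ã_i(x,y) d_{n-i}(x,y,s). In particular, A_{n+1}(x,1,0) = Σ_{i=0}^{n} C(n,i) A_i(x) d_{n-i}(x), where A_i(x) is the Eulerian polynomial and d_{n-i}(x) the derangement polynomial. -/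
open scoped Classical
open Finset

noncomputable section

/-- `Ã_n(x,y) = Σ_π x^asc(π) y^(des(π)+1)` for `n ≥ 1`, with `Ã_0 = 1` -/
def Atil (n : ℕ) (x y : ℝ) : ℝ :=
  if n = 0 then 1 else ∑ π : Equiv.Perm (Fin n), x ^ ascNum π * y ^ (desNum π + 1)

/-- `d_n(x,y,s) = Σ_π x^exc(π) y^aexc(π) s^fix(π)` -/
def dxys (n : ℕ) (x y s : ℝ) : ℝ :=
  ∑ π : Equiv.Perm (Fin n), x ^ excNum π * y ^ aexcNum π * s ^ fixNum π

/-!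
Write `D = ∂ₓ + ∂_y + ∂ₛ`. Inserting the letter `n + 1` into a permutation of `[n]`, into its
one-line notation for `A` and `Ã` and into its cycle notation for `d`, gives
`A_{n+1} = (s + y) A_n + x y D A_n` for `n ≥ 1`, `Ã_{n+1} = y Ã_n + x y D Ã_n` and
`d_{n+1} = s d_n + x y D d_n`: the insertion at the front, after the letter `n`, or as a new fixed
point multiplies the weight by `y` or `s`, and every other insertion position changes the
statistics according to its type, which reproduces `x y D` on monomials. Since `x y D` is a
derivation, the Leibniz rule turns these recurrences into the binomial convolution
`A_{n+1} = Σ C(n,i) Ã_i d_{n-i}`. Setting `y = 1` identifies `Ã_i` with the Eulerian polynomial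
(complementation exchanges ascents and descents), and `s = 0` keeps only derangements.
-/

theorem Derivation.eq_sum_choose_mul_of_recurrence {R A : Type*} [CommSemiring R] [CommSemiring A]
    [Algebra R A] (D : Derivation R A A) (a b : A) {f g h : ℕ → A}
    (hf : ∀ n, f (n + 1) = a * f n + D (f n)) (hg : ∀ n, g (n + 1) = b * g n + D (g n))
    (hh : ∀ n, h (n + 1) = (a + b) * h n + D (h n)) (h0 : h 0 = f 0 * g 0) (n : ℕ) :
    h n = ∑ i ∈ range (n + 1), (n.choose i : A) * (f i * g (n - i)) := by
  induction n with
  | zero => simp [h0]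
  | succ n ih =>
    rw [sum_choose_succ_mul (fun i j => f i * g j), hh, ih, map_sum, mul_sum, ← sum_add_distrib,
      ← sum_add_distrib]
    refine sum_congr rfl fun i hi => ?_
    have hi : n + 1 - i = n - i + 1 := by have := mem_range.1 hi; omega
    rw [hi, hf, hg, ← nsmul_eq_mul, map_nsmul, D.leibniz, smul_eq_mul, smul_eq_mul]
    simp only [nsmul_eq_mul]
    ring

namespace PermStat

open MvPolynomial

lemma sum_Ico_one_succ_split {M : Type*} [AddCommMonoid M] (f : ℕ → M) {p n : ℕ} (h : p ≤ n) :
    ∑ i ∈ Ico 1 (n + 1), f i =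
      ∑ i ∈ Ico 1 p, f i + (if 1 ≤ p then f p else 0) + ∑ i ∈ Ico (p + 1) (n + 1), f i := by
  rcases Nat.eq_zero_or_pos p with rfl | hp
  · simp
  · rw [if_pos (show 1 ≤ p from hp), ← sum_Ico_consecutive f hp (by omega : p ≤ n + 1),
      sum_eq_sum_Ico_succ_bot (by omega : p < n + 1), add_assoc]

lemma sum_fin_succ_eq_sum_Icc {M : Type*} [AddCommMonoid M] (f : ℕ → M) (n : ℕ) :
    ∑ i : Fin n, f (i + 1) = ∑ t ∈ Icc 1 n, f t := by
  rw [Fin.sum_univ_eq_sum_range (fun i => f (i + 1)), ← Ico_add_one_right_eq_Icc,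
    sum_Ico_eq_sum_range]
  simp [add_comm]

lemma card_filter_Icc_one_succ (P : ℕ → Prop) [DecidablePred P] (n : ℕ) :
    ((Icc 1 (n + 1)).filter P).card = ((Icc 1 n).filter P).card + if P (n + 1) then 1 else 0 := by
  rw [card_filter, card_filter, sum_Icc_succ_top (by omega)]

section PermVal

variable {n : ℕ} (π : Equiv.Perm (Fin n))

lemma permVal_of_mem {k : ℕ} (h1 : 1 ≤ k) (h2 : k ≤ n) :
    permVal π k = (π ⟨k - 1, by omega⟩).val + 1 :=
  dif_pos ⟨h1, h2⟩

lemma permVal_of_lt {k : ℕ} (h : n < k) : permVal π k = 0 := dif_neg (by omega)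

lemma one_le_permVal {k : ℕ} (h1 : 1 ≤ k) (h2 : k ≤ n) : 1 ≤ permVal π k := by
  rw [permVal_of_mem π h1 h2]; omega

lemma permVal_le (k : ℕ) : permVal π k ≤ n := by
  unfold permVal
  split_ifs with h
  · exact (π _).is_lt
  · exact Nat.zero_le n

lemma permVal_injOn {k l : ℕ} (hk1 : 1 ≤ k) (hk2 : k ≤ n) (hl1 : 1 ≤ l) (hl2 : l ≤ n)
    (h : permVal π k = permVal π l) : k = l := by
  rw [permVal_of_mem π hk1 hk2, permVal_of_mem π hl1 hl2, Nat.add_right_cancel_iff,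
    Fin.val_inj, π.apply_eq_iff_eq, Fin.mk.injEq] at h
  omega

/-- Also at `t = n`, where `permVal π (n + 1) = 0`. -/
lemma permVal_succ_ne {t : ℕ} (h1 : 1 ≤ t) (h2 : t ≤ n) : permVal π (t + 1) ≠ permVal π t := by
  intro h
  rcases Nat.lt_or_ge t n with ht | ht
  · exact absurd (permVal_injOn π (by omega) ht h1 h2 h) (by omega)
  · rw [permVal_of_lt π (by omega)] at h
    have := one_le_permVal π h1 h2
    omega

lemma lt_or_permVal_succ_eq_zero {t : ℕ} (ht : t ≤ n) : t < n ∨ permVal π (t + 1) = 0 := by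
  rcases Nat.lt_or_ge t n with h | h
  · exact Or.inl h
  · exact Or.inr (permVal_of_lt π (by omega))

lemma ext_of_permVal {π π' : Equiv.Perm (Fin n)}
    (h : ∀ k, 1 ≤ k → k ≤ n → permVal π k = permVal π' k) : π = π' := by
  ext j
  have := h (j + 1) (by omega) j.is_lt
  rwa [permVal_of_mem π (by omega) j.is_lt, permVal_of_mem π' (by omega) j.is_lt,
    Nat.add_right_cancel_iff] at this

lemma card_filter_permVal_eq {v : ℕ} (hv1 : 1 ≤ v) (hv2 : v ≤ n) :
    ((Icc 1 n).filter fun k => permVal π k = v).card = 1 := by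
  set j := π.symm ⟨v - 1, by omega⟩
  have hj : permVal π (j + 1) = v := by
    rw [permVal_of_mem π (by omega) j.is_lt]
    simp only [Nat.succ_eq_add_one, add_tsub_cancel_right, Fin.eta, Equiv.apply_symm_apply, j]
    omega
  rw [card_eq_one]
  refine ⟨j + 1, eq_singleton_iff_unique_mem.2 ⟨?_, fun k hk => ?_⟩⟩
  · simp [hj]
  · simp only [mem_filter, mem_Icc] at hk
    exact permVal_injOn π hk.1.1 hk.1.2 (by omega) j.is_lt (hk.2.trans hj.symm)

end PermVal

lemma sum_perm_succ_eq_sum_sum {m : ℕ} {β : Type*} [AddCommMonoid β]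
    (ι : Equiv.Perm (Fin m) → Fin (m + 1) → Equiv.Perm (Fin (m + 1)))
    (hι : ∀ π π' p p', ι π p = ι π' p' → π = π' ∧ p = p') (F : Equiv.Perm (Fin (m + 1)) → β) :
    ∑ σ, F σ = ∑ π, ∑ p, F (ι π p) := by
  have hbij : Function.Bijective fun x : Equiv.Perm (Fin m) × Fin (m + 1) => ι x.1 x.2 := by
    refine (Fintype.bijective_iff_injective_and_card _).2 ⟨fun x y h => ?_, ?_⟩
    · exact Prod.ext (hι _ _ _ _ h).1 (hι _ _ _ _ h).2
    · simp [Fintype.card_perm, Nat.factorial_succ, mul_comm]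
  rw [← Fintype.sum_prod_type']
  exact (Fintype.sum_bijective _ hbij _ _ fun _ => rfl).symm

section WordStatistics

variable (r : ℕ → ℕ → Prop) [DecidableRel r]

def gapCount (w : ℕ → ℕ) (n : ℕ) : ℕ :=
  ((Icc 1 (n - 1)).filter fun i => r (w i) (w (i + 1))).card

def pointCount (w : ℕ → ℕ) (n : ℕ) : ℕ :=
  ((Icc 1 n).filter fun i => r i (w i)).card

lemma gapCount_eq_sum (w : ℕ → ℕ) (n : ℕ) :
    gapCount r w n = ∑ i ∈ Ico 1 n, if r (w i) (w (i + 1)) then 1 else 0 := by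
  rw [gapCount, card_filter]
  exact sum_congr (by ext; simp only [mem_Icc, mem_Ico]; omega) fun _ _ => rfl

/-- `w'` is the word `w = w₁ ⋯ wₘ` with the letter `M` inserted after its first `p` letters. -/
lemma gapCount_insert {w w' : ℕ → ℕ} {m p M : ℕ} (hp : p ≤ m)
    (hleft : ∀ k, 1 ≤ k → k ≤ p → w' k = w k) (hmid : w' (p + 1) = M)
    (hright : ∀ k, p + 2 ≤ k → k ≤ m + 1 → w' k = w (k - 1)) :
    gapCount r w' (m + 1) + (if 1 ≤ p ∧ p < m ∧ r (w p) (w (p + 1)) then 1 else 0) =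
      gapCount r w m + (if 1 ≤ p ∧ r (w p) M then 1 else 0) +
        (if p < m ∧ r M (w (p + 1)) then 1 else 0) := by
  set g := fun i => if r (w i) (w (i + 1)) then 1 else 0
  set g' := fun i => if r (w' i) (w' (i + 1)) then 1 else 0
  have hlow : ∑ i ∈ Ico 1 p, g' i = ∑ i ∈ Ico 1 p, g i :=
    sum_congr rfl fun i hi => by
      simp only [mem_Ico] at hi
      simp only [g, g', hleft i hi.1 hi.2.le, hleft (i + 1) (by omega) hi.2]
  have hhigh : ∑ i ∈ Ico (p + 2) (m + 1), g' i = ∑ i ∈ Ico (p + 1) m, g i := by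
    rw [← Nat.sub_add_cancel (by omega : 1 ≤ p + 2), ← Nat.sub_add_cancel (by omega : 1 ≤ m + 1),
      ← sum_Ico_add']
    refine sum_congr rfl fun i hi => ?_
    simp only [mem_Ico] at hi
    simp only [g, g', hright (i + 1) (by omega) (by omega),
      hright (i + 1 + 1) (by omega) (by omega), Nat.add_sub_cancel]
  rw [gapCount_eq_sum, gapCount_eq_sum]
  change ∑ i ∈ Ico 1 (m + 1), g' i + _ = ∑ i ∈ Ico 1 m, g i + _ + _
  rw [sum_Ico_one_succ_split g' hp]
  rcases Nat.lt_or_ge p m with hpm | hpm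
  · obtain ⟨n, rfl⟩ : ∃ n, m = n + 1 := ⟨m - 1, by omega⟩
    have hnext : w' (p + 1 + 1) = w (p + 1) := hright _ (by omega) (by omega)
    rw [sum_Ico_one_succ_split g (by omega : p ≤ n),
      sum_eq_sum_Ico_succ_bot (by omega : p + 1 < n + 1 + 1), hhigh, hlow]
    rcases Nat.eq_zero_or_pos p with rfl | hp1
    · simp only [zero_le, Ico_eq_empty_of_le, sum_empty, nonpos_iff_eq_zero, one_ne_zero,
        ↓reduceIte, add_zero, zero_add, hmid, Nat.reduceAdd, hnext, lt_add_iff_pos_left,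
        Order.lt_add_one_iff, true_and, false_and, g']
      omega
    · simp only [show 1 ≤ p from hp1, ↓reduceIte, hleft p hp1 le_rfl, hmid, hnext, hpm,
        true_and, g, g']
      omega
  · obtain rfl : p = m := by omega
    rcases Nat.eq_zero_or_pos p with rfl | hp1
    · simp
    · simp [g', show 1 ≤ p from hp1, hmid, hleft p hp1 le_rfl, hlow]

lemma pointCount_succ (w : ℕ → ℕ) (n : ℕ) :
    pointCount r w (n + 1) = pointCount r w n + if r (n + 1) (w (n + 1)) then 1 else 0 := by
  rw [pointCount, pointCount, card_filter, card_filter, sum_Icc_succ_top (by omega)]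

lemma pointCount_congr {w w' : ℕ → ℕ} {n : ℕ} (h : ∀ k, 1 ≤ k → k ≤ n → w' k = w k) :
    pointCount r w' n = pointCount r w n := by
  unfold pointCount
  congr 1
  exact filter_congr fun k hk => by rw [h k (mem_Icc.1 hk).1 (mem_Icc.1 hk).2]

lemma pointCount_update {w w' : ℕ → ℕ} {n t : ℕ} (ht1 : 1 ≤ t) (ht2 : t ≤ n)
    (h : ∀ k, 1 ≤ k → k ≤ n → k ≠ t → w' k = w k) :
    pointCount r w' n + (if r t (w t) then 1 else 0) =
      pointCount r w n + if r t (w' t) then 1 else 0 := by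
  have ht : t ∈ Icc 1 n := mem_Icc.2 ⟨ht1, ht2⟩
  have hrest : ∑ k ∈ (Icc 1 n).erase t, (if r k (w' k) then 1 else 0) =
      ∑ k ∈ (Icc 1 n).erase t, if r k (w k) then 1 else 0 :=
    sum_congr rfl fun k hk => by
      rw [mem_erase, mem_Icc] at hk
      rw [h k hk.2.1 hk.2.2 hk.1]
  rw [pointCount, pointCount, card_filter, card_filter, ← add_sum_erase _ _ ht,
    ← add_sum_erase _ (fun k => if r k (w k) then 1 else 0) ht, hrest]
  ac_rfl

end WordStatistics

section InsertMax

variable {m : ℕ}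

/-- Insert the letter `m + 1` into the one-line notation of `π` after its first `p` letters
(0-based positions). -/
def insertMaxFun (π : Equiv.Perm (Fin m)) (p j : Fin (m + 1)) : Fin (m + 1) :=
  if h : (j : ℕ) < p then (π ⟨j, by have := p.is_lt; omega⟩).castSucc
  else if h' : (j : ℕ) = p then Fin.last m
  else (π ⟨j - 1, by have := j.is_lt; omega⟩).castSucc

lemma insertMaxFun_injective (π : Equiv.Perm (Fin m)) (p : Fin (m + 1)) :
    Function.Injective (insertMaxFun π p) := by
  intro a b hab
  unfold insertMaxFun at hab
  have hlast : ∀ x : Fin m, x.castSucc ≠ Fin.last m := fun x => (Fin.castSucc_lt_last x).ne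
  split_ifs at hab
  all_goals first
  | exact absurd hab (hlast _)
  | exact absurd hab.symm (hlast _)
  | exact Fin.ext (by omega)
  | (have h := π.injective (Fin.castSucc_injective m hab)
     simp only [Fin.mk.injEq] at h
     exact Fin.ext (by omega))

def insertMax (π : Equiv.Perm (Fin m)) (p : Fin (m + 1)) : Equiv.Perm (Fin (m + 1)) :=
  Equiv.ofBijective _ (Finite.injective_iff_bijective.mp (insertMaxFun_injective π p))

lemma insertMax_apply_self (π : Equiv.Perm (Fin m)) (p : Fin (m + 1)) :
    insertMax π p p = Fin.last m := by
  simp [insertMax, insertMaxFun]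

lemma permVal_insertMax (π : Equiv.Perm (Fin m)) (p : Fin (m + 1)) {k : ℕ} (h1 : 1 ≤ k)
    (h2 : k ≤ m + 1) :
    permVal (insertMax π p) k =
      if k ≤ p then permVal π k else if k = p + 1 then m + 1 else permVal π (k - 1) := by
  rw [permVal_of_mem _ h1 h2]
  simp only [insertMax, Equiv.ofBijective_apply, insertMaxFun]
  split_ifs <;> try omega
  · rw [permVal_of_mem π h1 (by omega)]; rfl
  · simp
  · rw [permVal_of_mem π (by omega) (by omega)]; rfl

lemma insertMax_inj {π π' : Equiv.Perm (Fin m)} {p p' : Fin (m + 1)}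
    (h : insertMax π p = insertMax π' p') : π = π' ∧ p = p' := by
  obtain rfl : p = p' := by
    have hp := insertMax_apply_self π p
    rw [h] at hp
    exact (insertMax π' p').injective (hp.trans (insertMax_apply_self π' p').symm)
  refine ⟨ext_of_permVal fun k hk1 hk2 => ?_, rfl⟩
  by_cases hkp : k ≤ p
  · have e := congrArg (permVal · k) h
    simpa [permVal_insertMax _ p hk1 (by omega : k ≤ m + 1), hkp] using e
  · have e := congrArg (permVal · (k + 1)) h
    simpa [permVal_insertMax _ p (by omega : 1 ≤ k + 1) (by omega : k + 1 ≤ m + 1),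
      show ¬k + 1 ≤ p by omega, show k ≠ p by omega] using e

section Statistics

variable (π : Equiv.Perm (Fin m)) (p : Fin (m + 1))

lemma gapCount_insertMax (r : ℕ → ℕ → Prop) [DecidableRel r] :
    gapCount r (permVal (insertMax π p)) (m + 1) +
        (if 1 ≤ (p : ℕ) ∧ (p : ℕ) < m ∧ r (permVal π p) (permVal π (p + 1)) then 1 else 0) =
      gapCount r (permVal π) m + (if 1 ≤ (p : ℕ) ∧ r (permVal π p) (m + 1) then 1 else 0) +
        (if (p : ℕ) < m ∧ r (m + 1) (permVal π (p + 1)) then 1 else 0) :=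
  gapCount_insert r (by omega)
    (fun k hk1 hk2 => by rw [permVal_insertMax π p hk1 (by omega), if_pos hk2])
    (by rw [permVal_insertMax π p (by omega) (by omega), if_neg (by omega), if_pos rfl])
    (fun k hk1 hk2 => by
      rw [permVal_insertMax π p (by omega) hk2, if_neg (by omega), if_neg (by omega)])

lemma desNum_insertMax (hp : 1 ≤ (p : ℕ)) :
    desNum (insertMax π p) + (if permVal π (p + 1) < permVal π p then 1 else 0) =
      desNum π + 1 := by
  have h := gapCount_insertMax π p (fun a b => b < a)
  have := one_le_permVal π hp (by omega)
  have := permVal_le π p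
  have := permVal_le π (p + 1)
  have := lt_or_permVal_succ_eq_zero π (t := p) (by omega)
  simp only [desNum, gapCount] at h ⊢
  split_ifs at h ⊢ <;> omega

lemma ascNum_insertMax (hp : 1 ≤ (p : ℕ)) :
    ascNum (insertMax π p) + (if permVal π p < permVal π (p + 1) then 1 else 0) =
      ascNum π + 1 := by
  have h := gapCount_insertMax π p (fun a b => a < b)
  have := permVal_le π p
  have := permVal_le π (p + 1)
  have := lt_or_permVal_succ_eq_zero π (t := p) (by omega)
  simp only [ascNum, gapCount] at h ⊢
  split_ifs at h ⊢ <;> omega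

lemma bascNum_insertMax (hp : 1 ≤ (p : ℕ)) :
    bascNum (insertMax π p) + (if permVal π p + 2 ≤ permVal π (p + 1) then 1 else 0) =
      bascNum π + if permVal π p = m then 0 else 1 := by
  have h := gapCount_insertMax π p (fun a b => a + 2 ≤ b)
  have := permVal_le π p
  have := permVal_le π (p + 1)
  have := lt_or_permVal_succ_eq_zero π (t := p) (by omega)
  simp only [bascNum, gapCount] at h ⊢
  split_ifs at h ⊢ <;> omega

lemma sucNum_insertMax (hp : 1 ≤ (p : ℕ)) :
    sucNum (insertMax π p) + (if permVal π (p + 1) = permVal π p + 1 then 1 else 0) =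
      sucNum π + if permVal π p = m then 1 else 0 := by
  have h := gapCount_insertMax π p (fun a b => b = a + 1)
  have := permVal_le π p
  have := permVal_le π (p + 1)
  have := lt_or_permVal_succ_eq_zero π (t := p) (by omega)
  simp only [sucNum, gapCount] at h ⊢
  split_ifs at h ⊢ <;> omega

lemma gapCount_insertMax_zero (hm : 1 ≤ m) (r : ℕ → ℕ → Prop) [DecidableRel r] :
    gapCount r (permVal (insertMax π 0)) (m + 1) =
      gapCount r (permVal π) m + if r (m + 1) (permVal π 1) then 1 else 0 := by
  simpa [show 0 < m by omega] using gapCount_insertMax π 0 r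

lemma stats_insertMax_zero (hm : 1 ≤ m) :
    desNum (insertMax π 0) = desNum π + 1 ∧ ascNum (insertMax π 0) = ascNum π ∧
      bascNum (insertMax π 0) = bascNum π ∧ sucNum (insertMax π 0) = sucNum π := by
  have := permVal_le π 1
  refine ⟨?_, ?_, ?_, ?_⟩
  · exact (gapCount_insertMax_zero π hm (fun a b => b < a)).trans (by rw [if_pos (by omega)]; rfl)
  · exact (gapCount_insertMax_zero π hm (fun a b => a < b)).trans (by rw [if_neg (by omega)]; rfl)
  · exact (gapCount_insertMax_zero π hm (fun a b => a + 2 ≤ b)).trans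
      (by rw [if_neg (by omega)]; rfl)
  · exact (gapCount_insertMax_zero π hm (fun a b => b = a + 1)).trans
      (by rw [if_neg (by omega)]; rfl)

end Statistics

end InsertMax

section CycleInsertMax

variable {m : ℕ}

/-- Insert `m + 1` into the cycle of `π` right after `q` (0-based); for `q = m` it becomes a
new fixed point. -/
def cycleInsertMaxFun (π : Equiv.Perm (Fin m)) (q j : Fin (m + 1)) : Fin (m + 1) :=
  if h₀ : (j : ℕ) = q then Fin.last m
  else if h : (j : ℕ) = m then (π ⟨q, by have := j.is_lt; have := q.is_lt; omega⟩).castSucc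
  else (π ⟨j, by have := j.is_lt; omega⟩).castSucc

lemma cycleInsertMaxFun_injective (π : Equiv.Perm (Fin m)) (q : Fin (m + 1)) :
    Function.Injective (cycleInsertMaxFun π q) := by
  intro a b hab
  unfold cycleInsertMaxFun at hab
  have hlast : ∀ x : Fin m, x.castSucc ≠ Fin.last m := fun x => (Fin.castSucc_lt_last x).ne
  split_ifs at hab
  all_goals first
  | exact absurd hab (hlast _)
  | exact absurd hab.symm (hlast _)
  | exact Fin.ext (by omega)
  | (have h := π.injective (Fin.castSucc_injective m hab)
     simp only [Fin.mk.injEq] at h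
     exact Fin.ext (by omega))

def cycleInsertMax (π : Equiv.Perm (Fin m)) (q : Fin (m + 1)) : Equiv.Perm (Fin (m + 1)) :=
  Equiv.ofBijective _ (Finite.injective_iff_bijective.mp (cycleInsertMaxFun_injective π q))

lemma cycleInsertMax_apply_self (π : Equiv.Perm (Fin m)) (q : Fin (m + 1)) :
    cycleInsertMax π q q = Fin.last m := by
  simp [cycleInsertMax, cycleInsertMaxFun]

lemma permVal_cycleInsertMax (π : Equiv.Perm (Fin m)) (q : Fin (m + 1)) {k : ℕ} (h1 : 1 ≤ k)
    (h2 : k ≤ m + 1) :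
    permVal (cycleInsertMax π q) k =
      if k = q + 1 then m + 1 else if k = m + 1 then permVal π (q + 1) else permVal π k := by
  rw [permVal_of_mem _ h1 h2]
  simp only [cycleInsertMax, Equiv.ofBijective_apply, cycleInsertMaxFun]
  split_ifs <;> try omega
  · simp
  · rw [permVal_of_mem π (by omega) (by omega)]; rfl
  · rw [permVal_of_mem π h1 (by omega)]; rfl

lemma cycleInsertMax_inj {π π' : Equiv.Perm (Fin m)} {q q' : Fin (m + 1)}
    (h : cycleInsertMax π q = cycleInsertMax π' q') : π = π' ∧ q = q' := by
  obtain rfl : q = q' := by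
    have hq := cycleInsertMax_apply_self π q
    rw [h] at hq
    exact (cycleInsertMax π' q').injective (hq.trans (cycleInsertMax_apply_self π' q').symm)
  refine ⟨ext_of_permVal fun k hk1 hk2 => ?_, rfl⟩
  by_cases hkq : k = q + 1
  · have e := congrArg (permVal · (m + 1)) h
    simpa [permVal_cycleInsertMax _ q (by omega : 1 ≤ m + 1) le_rfl, show m ≠ q by omega, hkq]
      using e
  · have e := congrArg (permVal · k) h
    simpa [permVal_cycleInsertMax _ q hk1 (by omega : k ≤ m + 1), hkq, show k ≠ m + 1 by omega]
      using e

section Statistics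

variable (π : Equiv.Perm (Fin m)) (q : Fin (m + 1))

lemma pointCount_cycleInsertMax (r : ℕ → ℕ → Prop) [DecidableRel r] (hq : (q : ℕ) < m) :
    pointCount r (permVal (cycleInsertMax π q)) (m + 1) +
        (if r (q + 1) (permVal π (q + 1)) then 1 else 0) =
      pointCount r (permVal π) m + (if r (q + 1) (m + 1) then 1 else 0) +
        (if r (m + 1) (permVal π (q + 1)) then 1 else 0) := by
  have h := pointCount_update r (w := permVal π) (w' := permVal (cycleInsertMax π q))
    (n := m) (t := q + 1) (by omega) (by omega) fun k hk1 hk2 hkq => by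
      rw [permVal_cycleInsertMax π q hk1 (by omega), if_neg hkq, if_neg (by omega)]
  rw [permVal_cycleInsertMax π q (by omega) (by omega), if_pos rfl] at h
  rw [pointCount_succ, permVal_cycleInsertMax π q (by omega) le_rfl,
    if_neg (show m + 1 ≠ q + 1 by omega), if_pos rfl, ← h]
  ac_rfl

lemma pointCount_cycleInsertMax_last (r : ℕ → ℕ → Prop) [DecidableRel r] :
    pointCount r (permVal (cycleInsertMax π (Fin.last m))) (m + 1) =
      pointCount r (permVal π) m + if r (m + 1) (m + 1) then 1 else 0 := by
  rw [pointCount_succ, pointCount_congr r (w := permVal π) fun k hk1 hk2 => by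
      rw [permVal_cycleInsertMax π _ hk1 (by omega), if_neg (by simp; omega), if_neg (by omega)],
    permVal_cycleInsertMax π _ (by omega) le_rfl,
    if_pos (show m + 1 = (Fin.last m : ℕ) + 1 by simp)]

lemma excNum_cycleInsertMax (hq : (q : ℕ) < m) :
    excNum (cycleInsertMax π q) + (if q + 1 < permVal π (q + 1) then 1 else 0) =
      excNum π + 1 := by
  have h := pointCount_cycleInsertMax π q (fun a b => a < b) hq
  beta_reduce at h
  have := permVal_le π (q + 1)
  rwa [if_pos (show q + 1 < m + 1 by omega), if_neg (show ¬m + 1 < permVal π (q + 1) by omega),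
    add_zero] at h

lemma aexcNum_cycleInsertMax (hq : (q : ℕ) < m) :
    aexcNum (cycleInsertMax π q) + (if permVal π (q + 1) < q + 1 then 1 else 0) =
      aexcNum π + 1 := by
  have h := pointCount_cycleInsertMax π q (fun a b => b < a) hq
  beta_reduce at h
  have := permVal_le π (q + 1)
  rwa [if_neg (show ¬m + 1 < q + 1 by omega), if_pos (show permVal π (q + 1) < m + 1 by omega),
    add_zero] at h

lemma fixNum_cycleInsertMax (hq : (q : ℕ) < m) :
    fixNum (cycleInsertMax π q) + (if permVal π (q + 1) = q + 1 then 1 else 0) = fixNum π := by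
  have h := pointCount_cycleInsertMax π q (fun a b => b = a) hq
  beta_reduce at h
  have := permVal_le π (q + 1)
  rwa [if_neg (show ¬m + 1 = q + 1 by omega), if_neg (show ¬permVal π (q + 1) = m + 1 by omega),
    add_zero, add_zero] at h

lemma stats_cycleInsertMax_last :
    excNum (cycleInsertMax π (Fin.last m)) = excNum π ∧
    aexcNum (cycleInsertMax π (Fin.last m)) = aexcNum π ∧
    fixNum (cycleInsertMax π (Fin.last m)) = fixNum π + 1 := by
  refine ⟨?_, ?_, ?_⟩
  · exact (pointCount_cycleInsertMax_last π (fun a b => a < b)).trans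
      (by rw [if_neg (lt_irrefl _)]; rfl)
  · exact (pointCount_cycleInsertMax_last π (fun a b => b < a)).trans
      (by rw [if_neg (lt_irrefl _)]; rfl)
  · exact (pointCount_cycleInsertMax_last π (fun a b => b = a)).trans (by rw [if_pos rfl]; rfl)

end Statistics

end CycleInsertMax

abbrev Poly3 : Type := MvPolynomial (Fin 3) ℝ

/-- The monomial `x^b y^d s^u`, with `x, y, s` the variables `X 0, X 1, X 2`. -/
def mono (b d u : ℕ) : Poly3 := X 0 ^ b * X 1 ^ d * X 2 ^ u

def xyD : Derivation ℝ Poly3 Poly3 :=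
  (X 0 * X 1 : Poly3) • (pderiv 0 + pderiv 1 + pderiv 2)

lemma xyD_mono (b d u : ℕ) :
    xyD (mono b d u) =
      b • mono b (d + 1) u + d • mono (b + 1) d u + u • mono (b + 1) (d + 1) (u - 1) := by
  rcases b with _ | b <;> rcases d with _ | d <;> rcases u with _ | u <;>
    simp [xyD, mono, Derivation.leibniz, Derivation.leibniz_pow, pderiv_X] <;> ring_nf <;> simp

lemma X_one_mul_mono (b d u : ℕ) : X 1 * mono b d u = mono b (d + 1) u := by
  unfold mono; ring

lemma X_two_mul_mono (b d u : ℕ) : X 2 * mono b d u = mono b d (u + 1) := by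
  unfold mono; ring

def weightA {n : ℕ} (π : Equiv.Perm (Fin n)) : Poly3 := mono (bascNum π) (desNum π) (sucNum π)

def weightT {n : ℕ} (π : Equiv.Perm (Fin n)) : Poly3 := mono (ascNum π) (desNum π + 1) 0

def weightD {n : ℕ} (π : Equiv.Perm (Fin n)) : Poly3 := mono (excNum π) (aexcNum π) (fixNum π)

def polyA (n : ℕ) : Poly3 := ∑ π : Equiv.Perm (Fin n), weightA π

def polyT (n : ℕ) : Poly3 := if n = 0 then 1 else ∑ π : Equiv.Perm (Fin n), weightT π

def polyD (n : ℕ) : Poly3 := ∑ π : Equiv.Perm (Fin n), weightD π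

section Counting

variable {m : ℕ} (π : Equiv.Perm (Fin m))

/-- The position `m` counts too, since `permVal π (m + 1) = 0`. -/
lemma card_filter_descent (hm : 1 ≤ m) :
    ((Icc 1 m).filter fun t => permVal π (t + 1) < permVal π t).card = desNum π + 1 := by
  obtain ⟨n, rfl⟩ : ∃ n, m = n + 1 := ⟨m - 1, by omega⟩
  have := one_le_permVal π (k := n + 1) (by omega) le_rfl
  rw [card_filter_Icc_one_succ, permVal_of_lt π (by omega : n + 1 < n + 1 + 1), if_pos (by omega)]
  rfl

lemma card_filter_not_descent (hm : 1 ≤ m) :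
    ((Icc 1 m).filter fun t => ¬permVal π (t + 1) < permVal π t).card = ascNum π := by
  obtain ⟨n, rfl⟩ : ∃ n, m = n + 1 := ⟨m - 1, by omega⟩
  have := one_le_permVal π (k := n + 1) (by omega) le_rfl
  rw [card_filter_Icc_one_succ, permVal_of_lt π (by omega : n + 1 < n + 1 + 1),
    if_neg (by omega), add_zero, ascNum, Nat.add_sub_cancel]
  congr 1
  refine filter_congr fun t ht => ?_
  have := permVal_succ_ne π (t := t) (mem_Icc.1 ht).1 (by have := (mem_Icc.1 ht).2; omega)
  omega

lemma card_filter_ne_max_descent (hm : 1 ≤ m) :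
    ((Icc 1 m).filter fun t => ¬permVal π t = m ∧ permVal π (t + 1) < permVal π t).card =
      desNum π := by
  have hsplit := card_filter_add_card_filter_not (s := (Icc 1 m).filter fun t =>
    permVal π (t + 1) < permVal π t) (fun t => permVal π t = m)
  have hmax : ((Icc 1 m).filter fun t =>
      permVal π (t + 1) < permVal π t ∧ permVal π t = m) = (Icc 1 m).filter fun t =>
        permVal π t = m :=
    filter_congr fun t ht => by
      have := permVal_succ_ne π (mem_Icc.1 ht).1 (mem_Icc.1 ht).2
      have := permVal_le π (t + 1)
      omega
  rw [filter_filter, filter_filter, hmax, card_filter_permVal_eq π hm le_rfl,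
    card_filter_descent π hm] at hsplit
  rw [← filter_congr fun t _ => and_comm]
  omega

lemma card_filter_succession (hm : 1 ≤ m) :
    ((Icc 1 m).filter fun t => ¬permVal π t = m ∧ ¬permVal π (t + 1) < permVal π t ∧
      permVal π (t + 1) = permVal π t + 1).card = sucNum π := by
  obtain ⟨n, rfl⟩ : ∃ n, m = n + 1 := ⟨m - 1, by omega⟩
  rw [card_filter_Icc_one_succ, permVal_of_lt π (by omega : n + 1 < n + 1 + 1),
    if_neg (by omega), add_zero, sucNum, Nat.add_sub_cancel]
  congr 1
  refine filter_congr fun t ht => ?_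
  have := permVal_le π (t + 1)
  omega

lemma card_filter_big_ascent (hm : 1 ≤ m) :
    ((Icc 1 m).filter fun t => ¬permVal π t = m ∧ ¬permVal π (t + 1) < permVal π t ∧
      ¬permVal π (t + 1) = permVal π t + 1).card = bascNum π := by
  obtain ⟨n, rfl⟩ : ∃ n, m = n + 1 := ⟨m - 1, by omega⟩
  have := one_le_permVal π (k := n + 1) (by omega) le_rfl
  rw [card_filter_Icc_one_succ, permVal_of_lt π (by omega : n + 1 < n + 1 + 1),
    if_neg (by omega), add_zero, bascNum, Nat.add_sub_cancel]
  congr 1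
  refine filter_congr fun t ht => ?_
  have := permVal_succ_ne π (t := t) (mem_Icc.1 ht).1 (by have := (mem_Icc.1 ht).2; omega)
  have := permVal_le π (t + 1)
  omega

end Counting

section Recurrences

variable {m : ℕ} (π : Equiv.Perm (Fin m))

/-- `weightA` of `π` with `m + 1` inserted after position `t ≥ 1`, by the type of the gap at
`t`: after the letter `m`, a descent (or the end), a succession, or a big ascent. -/
def gapWeightA (t : ℕ) : Poly3 :=
  if permVal π t = m then mono (bascNum π) (desNum π) (sucNum π + 1)
  else if permVal π (t + 1) < permVal π t then mono (bascNum π + 1) (desNum π) (sucNum π)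
  else if permVal π (t + 1) = permVal π t + 1 then
    mono (bascNum π + 1) (desNum π + 1) (sucNum π - 1)
  else mono (bascNum π) (desNum π + 1) (sucNum π)

def gapWeightT (t : ℕ) : Poly3 :=
  if permVal π (t + 1) < permVal π t then mono (ascNum π + 1) (desNum π + 1) 0
  else mono (ascNum π) (desNum π + 2) 0

def pointWeightD (t : ℕ) : Poly3 :=
  if t < permVal π t then mono (excNum π) (aexcNum π + 1) (fixNum π)
  else if permVal π t < t then mono (excNum π + 1) (aexcNum π) (fixNum π)
  else mono (excNum π + 1) (aexcNum π + 1) (fixNum π - 1)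

lemma weightA_insertMax (p : Fin (m + 1)) (hp : 1 ≤ (p : ℕ)) :
    weightA (insertMax π p) = gapWeightA π p := by
  have hB := bascNum_insertMax π p hp
  have hD := desNum_insertMax π p hp
  have hU := sucNum_insertMax π p hp
  have := permVal_succ_ne π hp (by omega)
  have := permVal_le π (p + 1)
  unfold weightA gapWeightA
  split_ifs at hB hD hU ⊢ <;> first
    | omega
    | exact congr (congr (congrArg mono (by omega)) (by omega)) (by omega)

lemma weightT_insertMax (p : Fin (m + 1)) (hp : 1 ≤ (p : ℕ)) :
    weightT (insertMax π p) = gapWeightT π p := by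
  have hA := ascNum_insertMax π p hp
  have hD := desNum_insertMax π p hp
  have := permVal_succ_ne π hp (by omega)
  unfold weightT gapWeightT
  split_ifs at hA hD ⊢ <;> first
    | omega
    | exact congr (congr (congrArg mono (by omega)) (by omega)) (by omega)

lemma weightD_cycleInsertMax (q : Fin (m + 1)) (hq : (q : ℕ) < m) :
    weightD (cycleInsertMax π q) = pointWeightD π (q + 1) := by
  have hE := excNum_cycleInsertMax π q hq
  have hA := aexcNum_cycleInsertMax π q hq
  have hF := fixNum_cycleInsertMax π q hq
  unfold weightD pointWeightD
  split_ifs at hE hA hF ⊢ <;> first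
    | omega
    | exact congr (congr (congrArg mono (by omega)) (by omega)) (by omega)

lemma sum_gapWeightA (hm : 1 ≤ m) :
    ∑ t ∈ Icc 1 m, gapWeightA π t = X 2 * weightA π + xyD (weightA π) := by
  simp only [gapWeightA, sum_ite, sum_const, filter_filter, and_assoc]
  rw [card_filter_permVal_eq π hm le_rfl, card_filter_ne_max_descent π hm,
    card_filter_succession π hm, card_filter_big_ascent π hm, weightA, xyD_mono, X_two_mul_mono,
    one_smul]
  abel

lemma sum_gapWeightT (hm : 1 ≤ m) :
    ∑ t ∈ Icc 1 m, gapWeightT π t = xyD (weightT π) := by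
  simp only [gapWeightT, sum_ite, sum_const]
  rw [card_filter_descent π hm, card_filter_not_descent π hm, weightT, xyD_mono]
  simp only [zero_smul, add_zero]
  abel

lemma sum_pointWeightD :
    ∑ t ∈ Icc 1 m, pointWeightD π t = xyD (weightD π) := by
  have hA : ((Icc 1 m).filter fun t => ¬t < permVal π t ∧ permVal π t < t).card = aexcNum π :=
    congrArg card (filter_congr fun t _ => by omega)
  have hF : ((Icc 1 m).filter fun t => ¬t < permVal π t ∧ ¬permVal π t < t).card = fixNum π :=
    congrArg card (filter_congr fun t _ => by omega)
  simp only [pointWeightD, sum_ite, sum_const, filter_filter]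
  rw [hA, hF, weightD, xyD_mono, ← add_assoc]
  rfl

lemma sum_weightA_insertMax (hm : 1 ≤ m) :
    ∑ p, weightA (insertMax π p) = (X 2 + X 1) * weightA π + xyD (weightA π) := by
  obtain ⟨hd, -, hb, hs⟩ := stats_insertMax_zero π hm
  rw [Fin.sum_univ_succ, weightA, hd, hb, hs, ← X_one_mul_mono,
    sum_congr rfl fun i _ => weightA_insertMax π i.succ (by simp), ← weightA]
  simp only [Fin.val_succ]
  rw [sum_fin_succ_eq_sum_Icc (gapWeightA π), sum_gapWeightA π hm]
  ring

lemma sum_weightT_insertMax (hm : 1 ≤ m) :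
    ∑ p, weightT (insertMax π p) = X 1 * weightT π + xyD (weightT π) := by
  obtain ⟨hd, ha, -, -⟩ := stats_insertMax_zero π hm
  rw [Fin.sum_univ_succ, weightT, hd, ha, ← X_one_mul_mono,
    sum_congr rfl fun i _ => weightT_insertMax π i.succ (by simp), ← weightT]
  simp only [Fin.val_succ]
  rw [sum_fin_succ_eq_sum_Icc (gapWeightT π), sum_gapWeightT π hm]

lemma sum_weightD_cycleInsertMax :
    ∑ q, weightD (cycleInsertMax π q) = X 2 * weightD π + xyD (weightD π) := by
  obtain ⟨he, ha, hf⟩ := stats_cycleInsertMax_last π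
  rw [Fin.sum_univ_castSucc, weightD, he, ha, hf, ← X_two_mul_mono,
    sum_congr rfl fun i _ => weightD_cycleInsertMax π i.castSucc (by simp), ← weightD]
  simp only [Fin.val_castSucc]
  rw [sum_fin_succ_eq_sum_Icc (pointWeightD π), sum_pointWeightD π, add_comm]

end Recurrences

lemma polyA_succ {m : ℕ} (hm : 1 ≤ m) :
    polyA (m + 1) = (X 2 + X 1) * polyA m + xyD (polyA m) := by
  rw [polyA, sum_perm_succ_eq_sum_sum insertMax (fun _ _ _ _ h => insertMax_inj h),
    sum_congr rfl fun π _ => sum_weightA_insertMax π hm, sum_add_distrib, ← mul_sum, ← map_sum,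
    polyA]

lemma polyT_succ (m : ℕ) : polyT (m + 1) = X 1 * polyT m + xyD (polyT m) := by
  rcases Nat.eq_zero_or_pos m with rfl | hm
  · simp [polyT, weightT, ascNum, desNum, mono]
  · rw [polyT, if_neg (by omega), polyT, if_neg (by omega),
      sum_perm_succ_eq_sum_sum insertMax (fun _ _ _ _ h => insertMax_inj h),
      sum_congr rfl fun π _ => sum_weightT_insertMax π hm, sum_add_distrib, ← mul_sum, ← map_sum]

lemma polyD_succ (m : ℕ) : polyD (m + 1) = X 2 * polyD m + xyD (polyD m) := by
  rw [polyD, sum_perm_succ_eq_sum_sum cycleInsertMax (fun _ _ _ _ h => cycleInsertMax_inj h),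
    sum_congr rfl fun π _ => sum_weightD_cycleInsertMax π, sum_add_distrib, ← mul_sum, ← map_sum,
    polyD]

lemma polyA_one : polyA 1 = 1 := by
  simp [polyA, weightA, bascNum, desNum, sucNum, mono]

lemma polyD_zero : polyD 0 = 1 := by
  simp [polyD, weightD, excNum, aexcNum, fixNum, mono]

theorem polyA_succ_eq_sum (n : ℕ) :
    polyA (n + 1) = ∑ i ∈ range (n + 1), (n.choose i : Poly3) * (polyT i * polyD (n - i)) :=
  xyD.eq_sum_choose_mul_of_recurrence (X 1) (X 2) (h := fun n => polyA (n + 1)) polyT_succ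
    polyD_succ (fun n => by rw [polyA_succ (by omega), add_comm (X 1)])
    (by rw [polyA_one, polyD_zero, polyT, if_pos rfl, one_mul]) n

lemma eval_mono (x y s : ℝ) (b d u : ℕ) : eval ![x, y, s] (mono b d u) = x ^ b * y ^ d * s ^ u := by
  simp [mono]

lemma eval_polyA (x y s : ℝ) (n : ℕ) : eval ![x, y, s] (polyA n) = Apoly n x y s := by
  simp [polyA, weightA, Apoly, eval_mono]

lemma eval_polyT (x y s : ℝ) (n : ℕ) : eval ![x, y, s] (polyT n) = Atil n x y := by
  unfold polyT Atil
  split_ifs <;> simp [weightT, eval_mono]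

lemma eval_polyD (x y s : ℝ) (n : ℕ) : eval ![x, y, s] (polyD n) = dxys n x y s := by
  simp [polyD, weightD, dxys, eval_mono]

lemma permVal_revPerm_mul {m : ℕ} (σ : Equiv.Perm (Fin m)) {k : ℕ} (h1 : 1 ≤ k) (h2 : k ≤ m) :
    permVal (Fin.revPerm * σ) k = m + 1 - permVal σ k := by
  rw [permVal_of_mem _ h1 h2, permVal_of_mem σ h1 h2, Equiv.Perm.mul_apply, Fin.revPerm_apply,
    Fin.val_rev]
  have := (σ ⟨k - 1, by omega⟩).is_lt
  omega

lemma ascNum_revPerm_mul {m : ℕ} (σ : Equiv.Perm (Fin m)) :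
    ascNum (Fin.revPerm * σ) = desNum σ := by
  unfold ascNum desNum
  congr 1
  refine filter_congr fun i hi => ?_
  rw [mem_Icc] at hi
  rw [permVal_revPerm_mul σ hi.1 (by omega), permVal_revPerm_mul σ (by omega) (by omega)]
  have := permVal_le σ i
  have := permVal_le σ (i + 1)
  omega

lemma Atil_one_eq_EulerA (m : ℕ) (x : ℝ) : Atil m x 1 = EulerA m x := by
  unfold Atil EulerA
  split_ifs with hm
  · subst hm
    simp [desNum]
  · simp only [one_pow, mul_one]
    exact (Fintype.sum_equiv (Equiv.mulLeft Fin.revPerm) _ _ fun σ => by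
      rw [Equiv.coe_mulLeft, ascNum_revPerm_mul]).symm

lemma dxys_one_zero_eq_dpoly (m : ℕ) (x : ℝ) : dxys m x 1 0 = dpoly m x := by
  rw [dxys, dpoly, sum_filter]
  refine sum_congr rfl fun π _ => ?_
  split_ifs with h <;> simp [h]

end PermStat

theorem stmt4 : ∀ n : ℕ,
    (∀ x y s : ℝ, Apoly (n + 1) x y s =
      ∑ i ∈ Finset.range (n + 1), (n.choose i : ℝ) * Atil i x y * dxys (n - i) x y s) ∧
    (∀ x : ℝ, Apoly (n + 1) x 1 0 =
      ∑ i ∈ Finset.range (n + 1), (n.choose i : ℝ) * EulerA i x * dpoly (n - i) x) := by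
  intro n
  have h : ∀ x y s : ℝ, Apoly (n + 1) x y s =
      ∑ i ∈ Finset.range (n + 1), (n.choose i : ℝ) * Atil i x y * dxys (n - i) x y s := by
    intro x y s
    simpa [PermStat.eval_polyA, PermStat.eval_polyT, PermStat.eval_polyD, mul_assoc] using
      congrArg (MvPolynomial.eval ![x, y, s]) (PermStat.polyA_succ_eq_sum n)
  refine ⟨h, fun x => ?_⟩
  rw [h]
  exact Finset.sum_congr rfl fun i _ => by
    rw [PermStat.Atil_one_eq_EulerA, PermStat.dxys_one_zero_eq_dpoly]

end
end

section
/- For every n ≥ 2, the derangement polynomials satisfy the identity of polynomials in x: d_n(x) = Σ_{k=0}^{n-2} C(n,k) · d_k(x) · (x + x² + ⋯ + x^{n-1-k}). -/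
open scoped Classical
open Finset

noncomputable section

/- ### Auxiliary development for stmt14 -/

section Aux14

variable {n : ℕ}

/-- excedances, `Fin`-level -/
def efin (π : Equiv.Perm (Fin n)) : ℕ :=
  (Finset.univ.filter fun i : Fin n => i < π i).card

/-- fixed points, `Fin`-level -/
def ffin (π : Equiv.Perm (Fin n)) : ℕ :=
  (Finset.univ.filter fun i : Fin n => π i = i).card

/-- weak excedances, `Fin`-level -/
def wfin (π : Equiv.Perm (Fin n)) : ℕ :=
  (Finset.univ.filter fun i : Fin n => i ≤ π i).card

lemma excNum_eq_efin (π : Equiv.Perm (Fin n)) : excNum π = efin π := by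
  unfold excNum efin
  apply Finset.card_bij (fun (k : ℕ) (hk : k ∈ (Finset.Icc 1 n).filter
    fun i => i < permVal π i) => (⟨k - 1, by
      simp only [Finset.mem_filter, Finset.mem_Icc] at hk; omega⟩ : Fin n))
  · intro k hk
    simp only [Finset.mem_filter, Finset.mem_Icc] at hk ⊢
    refine ⟨Finset.mem_univ _, ?_⟩
    have h1 : 1 ≤ k ∧ k ≤ n := ⟨hk.1.1, hk.1.2⟩
    rw [permVal, dif_pos h1] at hk
    rw [Fin.lt_def]
    simp only [Fin.val_mk]
    omega
  · intro k hk k' hk' h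
    simp only [Finset.mem_filter, Finset.mem_Icc] at hk hk'
    simp only [Fin.mk.injEq] at h
    omega
  · intro i hi
    simp only [Finset.mem_filter, Finset.mem_univ, true_and] at hi
    refine ⟨i.val + 1, ?_, ?_⟩
    · simp only [Finset.mem_filter, Finset.mem_Icc]
      have h1 : 1 ≤ i.val + 1 ∧ i.val + 1 ≤ n := ⟨by omega, by omega⟩
      refine ⟨h1, ?_⟩
      rw [permVal, dif_pos h1]
      have : (⟨i.val + 1 - 1, by omega⟩ : Fin n) = i := by
        apply Fin.ext; simp
      rw [this]
      have := Fin.lt_def.1 hi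
      omega
    · apply Fin.ext; simp

lemma fixNum_eq_ffin (π : Equiv.Perm (Fin n)) : fixNum π = ffin π := by
  unfold fixNum ffin
  apply Finset.card_bij (fun (k : ℕ) (hk : k ∈ (Finset.Icc 1 n).filter
    fun i => permVal π i = i) => (⟨k - 1, by
      simp only [Finset.mem_filter, Finset.mem_Icc] at hk; omega⟩ : Fin n))
  · intro k hk
    simp only [Finset.mem_filter, Finset.mem_Icc] at hk ⊢
    refine ⟨Finset.mem_univ _, ?_⟩
    have h1 : 1 ≤ k ∧ k ≤ n := ⟨hk.1.1, hk.1.2⟩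
    rw [permVal, dif_pos h1] at hk
    apply Fin.ext
    simp only [Fin.val_mk]
    omega
  · intro k hk k' hk' h
    simp only [Finset.mem_filter, Finset.mem_Icc] at hk hk'
    simp only [Fin.mk.injEq] at h
    omega
  · intro i hi
    simp only [Finset.mem_filter, Finset.mem_univ, true_and] at hi
    refine ⟨i.val + 1, ?_, ?_⟩
    · simp only [Finset.mem_filter, Finset.mem_Icc]
      have h1 : 1 ≤ i.val + 1 ∧ i.val + 1 ≤ n := ⟨by omega, by omega⟩
      refine ⟨h1, ?_⟩
      rw [permVal, dif_pos h1]
      have : (⟨i.val + 1 - 1, by omega⟩ : Fin n) = i := by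
        apply Fin.ext; simp
      rw [this, hi]
    · apply Fin.ext; simp

lemma wfin_eq (π : Equiv.Perm (Fin (n + 1))) :
    wfin π = efin (finRotate (n + 1) * π) + 1 := by
  unfold wfin efin
  have hmem : π⁻¹ (Fin.last n) ∈ Finset.univ.filter fun i : Fin (n+1) => i ≤ π i := by
    simp only [Finset.mem_filter, Finset.mem_univ, true_and, ← Equiv.Perm.mul_apply, mul_inv_cancel, Equiv.Perm.one_apply]
    exact Fin.le_last _
  have hset : (Finset.univ.filter fun i : Fin (n+1) => i < (finRotate (n+1) * π) i)
      = (Finset.univ.filter fun i : Fin (n+1) => i ≤ π i).erase (π⁻¹ (Fin.last n)) := by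
    ext i
    simp only [Finset.mem_filter, Finset.mem_univ, true_and, Finset.mem_erase,
      Equiv.Perm.mul_apply, finRotate_succ_apply]
    rw [Fin.lt_def, Fin.val_add_one]
    constructor
    · intro h
      by_cases hl : π i = Fin.last n
      · simp [hl] at h
      · rw [if_neg hl] at h
        refine ⟨fun he => hl ?_, Fin.le_def.2 (by omega)⟩
        rw [he, ← Equiv.Perm.mul_apply, mul_inv_cancel, Equiv.Perm.one_apply]
    · rintro ⟨h1, h2⟩
      have hl : π i ≠ Fin.last n := fun he => h1 (by rw [← he, ← Equiv.Perm.mul_apply, inv_mul_cancel, Equiv.Perm.one_apply])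
      rw [if_neg hl]
      have ha := Fin.le_def.1 h2
      have hb : (π i).val ≠ n := fun he => hl (Fin.ext (by simp [he]))
      omega
  rw [hset, Finset.card_erase_of_mem hmem]
  have hpos : 0 < (Finset.univ.filter fun i : Fin (n+1) => i ≤ π i).card :=
    Finset.card_pos.2 ⟨_, hmem⟩
  omega

lemma wfin_eq_efin_add_ffin (π : Equiv.Perm (Fin n)) : wfin π = efin π + ffin π := by
  unfold wfin efin ffin
  rw [← Finset.card_union_of_disjoint]
  · congr 1
    ext i
    simp only [Finset.mem_union, Finset.mem_filter, Finset.mem_univ, true_and]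
    constructor
    · intro h
      rcases lt_or_eq_of_le h with h | h
      · exact Or.inl h
      · exact Or.inr h.symm
    · rintro (h | h)
      · exact le_of_lt h
      · exact le_of_eq h.symm
  · rw [Finset.disjoint_filter]
    intro i _ h h'
    exact absurd h' (ne_of_gt h)

lemma sum_wfin (x : ℝ) :
    ∑ π : Equiv.Perm (Fin (n + 1)), x ^ wfin π
      = x * ∑ π : Equiv.Perm (Fin (n + 1)), x ^ efin π := by
  have h1 : ∀ π : Equiv.Perm (Fin (n+1)), x ^ wfin π = x ^ (efin (finRotate (n+1) * π) + 1) :=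
    fun π => by rw [wfin_eq]
  rw [Finset.sum_congr rfl fun π _ => h1 π]
  rw [Fintype.sum_equiv (Equiv.mulLeft (finRotate (n+1)))
    (fun π => x ^ (efin (finRotate (n+1) * π) + 1)) (fun σ => x ^ (efin σ + 1))
    (fun π => rfl)]
  rw [Finset.mul_sum]
  exact Finset.sum_congr rfl fun σ _ => by rw [pow_succ, mul_comm]

/-- set of non-fixed points -/
def nfSet (π : Equiv.Perm (Fin n)) : Finset (Fin n) :=
  Finset.univ.filter fun i => π i ≠ i

lemma dpoly_eq (k : ℕ) (x : ℝ) :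
    dpoly k x = ∑ τ ∈ Finset.univ.filter (fun τ : Equiv.Perm (Fin k) => ∀ i, τ i ≠ i),
      x ^ efin τ := by
  unfold dpoly
  apply Finset.sum_congr
  · apply Finset.filter_congr
    intro τ _
    rw [fixNum_eq_ffin]
    unfold ffin
    rw [Finset.card_eq_zero, Finset.filter_eq_empty_iff]
    simp
  · intro τ _
    rw [excNum_eq_efin]

lemma relabel (S : Finset (Fin n)) (x : ℝ) :
    ∑ π ∈ Finset.univ.filter (fun π : Equiv.Perm (Fin n) => nfSet π = S), x ^ efin π
      = dpoly S.card x := by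
  classical
  rw [dpoly_eq]
  set e := S.orderIsoOfFin rfl with he
  symm
  have hout : ∀ (τ : Equiv.Perm (Fin S.card)) (i : Fin n), i ∉ S →
      τ.extendDomain e.toEquiv i = i := fun τ i hi =>
    Equiv.Perm.extendDomain_apply_not_subtype τ e.toEquiv hi
  have himg : ∀ (τ : Equiv.Perm (Fin S.card)) (a : Fin S.card),
      τ.extendDomain e.toEquiv ↑(e a) = ↑(e (τ a)) := fun τ a =>
    Equiv.Perm.extendDomain_apply_image τ e.toEquiv a
  have hsub : ∀ (τ : Equiv.Perm (Fin S.card)) (i : Fin n) (hi : i ∈ S),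
      τ.extendDomain e.toEquiv i = ↑(e (τ (e.toEquiv.symm ⟨i, hi⟩))) := fun τ i hi =>
    Equiv.Perm.extendDomain_apply_subtype τ e.toEquiv hi
  apply Finset.sum_bij (fun (τ : Equiv.Perm (Fin S.card)) (_ : τ ∈ Finset.univ.filter
      (fun τ : Equiv.Perm (Fin S.card) => ∀ i, τ i ≠ i)) => τ.extendDomain e.toEquiv)
  · intro τ hτ
    simp only [Finset.mem_filter, Finset.mem_univ, true_and] at hτ ⊢
    ext i
    simp only [nfSet, Finset.mem_filter, Finset.mem_univ, true_and]
    by_cases hi : i ∈ S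
    · simp only [hi, iff_true]
      rw [hsub τ i hi]
      intro hcon
      apply hτ (e.toEquiv.symm ⟨i, hi⟩)
      have h1 : e (τ (e.toEquiv.symm ⟨i, hi⟩)) = ⟨i, hi⟩ := Subtype.coe_injective hcon
      apply e.injective
      rw [h1]
      simp
    · simp only [hi, iff_false, not_not]
      exact hout τ i hi
  · intro τ _ τ' _ h
    apply Equiv.ext
    intro a
    have h2 : (τ.extendDomain e.toEquiv) ↑(e a) = (τ'.extendDomain e.toEquiv) ↑(e a) := by
      rw [h]
    rw [himg τ a, himg τ' a] at h2
    exact e.toEquiv.injective (Subtype.coe_injective h2)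
  · intro π hπ
    simp only [Finset.mem_filter, Finset.mem_univ, true_and] at hπ
    have hmm : ∀ i, π i ≠ i ↔ i ∈ S := by
      intro i
      rw [← hπ]
      simp [nfSet]
    have hmaps : ∀ i, i ∈ S ↔ π i ∈ S := by
      intro i
      constructor
      · intro hi
        by_contra hni
        have h1 : π (π i) = π i := not_not.1 (fun h => hni ((hmm (π i)).1 h))
        have h2 : π i = i := π.injective h1
        exact ((hmm i).2 hi) h2
      · intro hpi
        by_contra hni
        have h1 : π i = i := not_not.1 (fun h => hni ((hmm i).1 h))
        rw [h1] at hpi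
        exact hni hpi
    refine ⟨e.toEquiv.permCongr.symm (π.subtypePerm (fun i => (hmaps i).symm)), ?_, ?_⟩
    · simp only [Finset.mem_filter, Finset.mem_univ, true_and]
      intro a hcon
      have h1 : (π.subtypePerm (fun i => (hmaps i).symm)) (e.toEquiv a) = e.toEquiv a := by
        have := congrArg (fun z => e.toEquiv z) hcon
        simpa [Equiv.permCongr_apply] using this
      have h2 : π ↑(e a) = ↑(e a) := congrArg Subtype.val h1
      exact ((hmm ↑(e a)).2 (e a).2) h2
    · ext i
      by_cases hi : i ∈ S
      · rw [hsub _ i hi]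
        simp [Equiv.permCongr_apply, Equiv.Perm.subtypePerm_apply]
      · rw [hout _ i hi]
        exact congrArg Fin.val (not_not.1 (fun h => hi ((hmm i).1 h))).symm
  · intro τ hτ
    simp only [Finset.mem_filter, Finset.mem_univ, true_and] at hτ
    congr 1
    unfold efin
    apply Finset.card_bij (fun (a : Fin S.card) (_ : a ∈ Finset.univ.filter
        (fun a : Fin S.card => a < τ a)) => (↑(e a) : Fin n))
    · intro a ha
      simp only [Finset.mem_filter, Finset.mem_univ, true_and] at ha ⊢
      rw [himg τ a]
      exact Subtype.coe_lt_coe.2 (e.lt_iff_lt.2 ha)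
    · intro a _ a' _ h
      exact e.toEquiv.injective (Subtype.coe_injective h)
    · intro b hb
      simp only [Finset.mem_filter, Finset.mem_univ, true_and] at hb
      have hbS : b ∈ S := by
        by_contra hni
        rw [hout τ b hni] at hb
        exact lt_irrefl _ hb
      refine ⟨e.toEquiv.symm ⟨b, hbS⟩, ?_, ?_⟩
      · simp only [Finset.mem_filter, Finset.mem_univ, true_and]
        rw [hsub τ b hbS] at hb
        have h1 : (⟨b, hbS⟩ : {x // x ∈ S}) < e (τ (e.toEquiv.symm ⟨b, hbS⟩)) :=
          Subtype.coe_lt_coe.1 hb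
        have h3 := e.symm.lt_iff_lt.2 h1
        simpa using h3
      · simp

lemma classify (x y : ℝ) :
    ∑ π : Equiv.Perm (Fin n), x ^ efin π * y ^ ffin π
      = ∑ k ∈ Finset.range (n + 1), (n.choose k : ℝ) * y ^ (n - k) * dpoly k x := by
  classical
  have step1 : ∑ π : Equiv.Perm (Fin n), x ^ efin π * y ^ ffin π
      = ∑ S ∈ (Finset.univ : Finset (Fin n)).powerset,
          ∑ π ∈ Finset.univ.filter (fun π : Equiv.Perm (Fin n) => nfSet π = S),
            x ^ efin π * y ^ ffin π :=
    (Finset.sum_fiberwise_of_maps_to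
      (fun π _ => Finset.mem_powerset.2 (Finset.filter_subset _ _)) _).symm
  rw [step1]
  have step2 : ∀ S ∈ (Finset.univ : Finset (Fin n)).powerset,
      ∑ π ∈ Finset.univ.filter (fun π : Equiv.Perm (Fin n) => nfSet π = S),
        x ^ efin π * y ^ ffin π = y ^ (n - S.card) * dpoly S.card x := by
    intro S hS
    have hsummand : ∀ π ∈ Finset.univ.filter (fun π : Equiv.Perm (Fin n) => nfSet π = S),
        x ^ efin π * y ^ ffin π = y ^ (n - S.card) * x ^ efin π := by
      intro π hπ
      simp only [Finset.mem_filter] at hπ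
      have hffin : ffin π = n - S.card := by
        unfold ffin
        have hcompl : (Finset.univ.filter fun i => π i = i) = Finset.univ \ S := by
          rw [← hπ.2]
          unfold nfSet
          ext i
          simp [not_not]
        rw [hcompl, Finset.card_sdiff_of_subset (Finset.subset_univ S), Finset.card_univ,
          Fintype.card_fin]
      rw [hffin]
      ring
    rw [Finset.sum_congr rfl hsummand, ← Finset.mul_sum, relabel]
  rw [Finset.sum_congr rfl step2]
  have hpc := Finset.sum_powerset_apply_card (fun m => y ^ (n - m) * dpoly m x)
    (x := (Finset.univ : Finset (Fin n)))
  rw [Finset.card_univ, Fintype.card_fin] at hpc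
  rw [hpc]
  apply Finset.sum_congr rfl
  intro k _
  rw [nsmul_eq_mul]
  ring

lemma keyII (hn : 1 ≤ n) (x : ℝ) :
    ∑ k ∈ Finset.range (n + 1), (n.choose k : ℝ) * x ^ (n - k) * dpoly k x
      = x * ∑ k ∈ Finset.range (n + 1), (n.choose k : ℝ) * dpoly k x := by
  obtain ⟨m, rfl⟩ : ∃ m, n = m + 1 := ⟨n - 1, by omega⟩
  have h1 := classify (n := m + 1) x x
  have h2 := classify (n := m + 1) x 1
  calc ∑ k ∈ Finset.range (m + 1 + 1), ((m + 1).choose k : ℝ) * x ^ (m + 1 - k) * dpoly k x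
      = ∑ π : Equiv.Perm (Fin (m + 1)), x ^ efin π * x ^ ffin π := h1.symm
    _ = ∑ π : Equiv.Perm (Fin (m + 1)), x ^ wfin π := by
        apply Finset.sum_congr rfl
        intro π _
        rw [wfin_eq_efin_add_ffin, pow_add]
    _ = x * ∑ π : Equiv.Perm (Fin (m + 1)), x ^ efin π := sum_wfin x
    _ = x * ∑ π : Equiv.Perm (Fin (m + 1)), x ^ efin π * (1 : ℝ) ^ ffin π := by
        simp
    _ = x * ∑ k ∈ Finset.range (m + 1 + 1), ((m + 1).choose k : ℝ) * dpoly k x := by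
        rw [h2]
        congr 1
        apply Finset.sum_congr rfl
        intro k _
        simp

lemma geo (x : ℝ) : ∀ j : ℕ, (1 - x) * ∑ m ∈ Finset.Icc 1 j, x ^ m = x - x ^ (j + 1)
  | 0 => by simp
  | j + 1 => by
      rw [Finset.sum_Icc_succ_top (by omega), mul_add, geo x j]
      ring

lemma dpoly_continuous (k : ℕ) : Continuous fun y : ℝ => dpoly k y := by
  unfold dpoly
  exact continuous_finset_sum _ fun π _ => continuous_pow _

lemma stmt14_aux (n : ℕ) (hn : 2 ≤ n) (x : ℝ) (hx : x ≠ 1) :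
    dpoly n x = ∑ k ∈ Finset.range (n - 1), (n.choose k : ℝ) * dpoly k x *
      ∑ m ∈ Finset.Icc 1 (n - 1 - k), x ^ m := by
  obtain ⟨p, rfl⟩ : ∃ p, n = p + 2 := ⟨n - 2, by omega⟩
  have hp2 : p + 2 - 1 = p + 1 := by omega
  have hII := keyII (n := p + 2) (by omega) x
  have h0 : ∑ k ∈ Finset.range (p + 2 + 1), ((p + 2).choose k : ℝ) * (x ^ (p + 2 - k) - x) * dpoly k x
      = 0 := by
    have hsplit : ∀ k ∈ Finset.range (p + 2 + 1),
        ((p + 2).choose k : ℝ) * (x ^ (p + 2 - k) - x) * dpoly k x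
          = ((p + 2).choose k : ℝ) * x ^ (p + 2 - k) * dpoly k x
            - x * (((p + 2).choose k : ℝ) * dpoly k x) := by
      intro k _
      ring
    rw [Finset.sum_congr rfl hsplit, Finset.sum_sub_distrib, ← Finset.mul_sum, hII]
    ring
  rw [Finset.sum_range_succ] at h0
  have hlast : ((p + 2).choose (p + 2) : ℝ) * (x ^ (p + 2 - (p + 2)) - x) * dpoly (p + 2) x
      = (1 - x) * dpoly (p + 2) x := by
    rw [Nat.choose_self, Nat.sub_self, pow_zero]
    push_cast
    ring
  rw [hlast] at h0
  have h1 : (1 - x) * dpoly (p + 2) x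
      = ∑ k ∈ Finset.range (p + 2), ((p + 2).choose k : ℝ) * (x - x ^ (p + 2 - k)) * dpoly k x := by
    have : ∑ k ∈ Finset.range (p + 2), ((p + 2).choose k : ℝ) * (x - x ^ (p + 2 - k)) * dpoly k x
        = -∑ k ∈ Finset.range (p + 2), ((p + 2).choose k : ℝ) * (x ^ (p + 2 - k) - x) * dpoly k x := by
      rw [← Finset.sum_neg_distrib]
      apply Finset.sum_congr rfl
      intro k _
      ring
    rw [this]
    linarith
  have h2 : ∀ k ∈ Finset.range (p + 2), ((p + 2).choose k : ℝ) * (x - x ^ (p + 2 - k)) * dpoly k x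
      = (1 - x) * (((p + 2).choose k : ℝ) * dpoly k x * ∑ m ∈ Finset.Icc 1 (p + 2 - 1 - k), x ^ m) := by
    intro k hk
    simp only [Finset.mem_range] at hk
    have hNk : p + 2 - k = (p + 2 - 1 - k) + 1 := by omega
    rw [hNk, ← geo x (p + 2 - 1 - k)]
    ring
  rw [Finset.sum_congr rfl h2, ← Finset.mul_sum] at h1
  have h3 := mul_left_cancel₀ (sub_ne_zero_of_ne (Ne.symm hx)) h1
  rw [h3]
  simp only [hp2]
  rw [Finset.sum_range_succ]
  have he : Finset.Icc 1 (p + 1 - (p + 1)) = (∅ : Finset ℕ) := by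
    have h4 : p + 1 - (p + 1) = 0 := by omega
    rw [h4]
    exact Finset.Icc_eq_empty (by omega)
  rw [he, Finset.sum_empty, mul_zero, add_zero]

end Aux14

theorem stmt14 : ∀ n : ℕ, 2 ≤ n → ∀ x : ℝ,
    dpoly n x = ∑ k ∈ Finset.range (n - 1), (n.choose k : ℝ) * dpoly k x *
      ∑ m ∈ Finset.Icc 1 (n - 1 - k), x ^ m := by
  intro n hn x
  rcases eq_or_ne x 1 with rfl | hx
  · have hfg : (fun y : ℝ => dpoly n y)
        = fun y : ℝ => ∑ k ∈ Finset.range (n - 1), (n.choose k : ℝ) * dpoly k y *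
          ∑ m ∈ Finset.Icc 1 (n - 1 - k), y ^ m := by
      apply Continuous.ext_on (dense_compl_singleton (1 : ℝ))
      · exact dpoly_continuous n
      · apply continuous_finset_sum
        intro k _
        exact ((continuous_const.mul (dpoly_continuous k)).mul
          (continuous_finset_sum _ fun m _ => continuous_pow m))
      · intro y hy
        exact stmt14_aux n hn y (Set.mem_compl_singleton_iff.1 hy)
    exact congrFun hfg 1
  · exact stmt14_aux n hn x hx

end
end
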